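/- arXiv:2011.13639 — 6 statements merged into one kernel-verified Lean document; each statement's English description precedes it below -/
import Mathlib

section
/- Let δ_1, δ_2 ∈ ℝ∪{∞} with δ_1 − δ_2 ∈ Γ_v, and let c ∈ K with v(c) = δ_1 − δ_2. Then the map Ψ_c : 𝒱(•,δ_2) → 𝒱(•,δ_1), V_E ↦ V_{cE} (where cE = {c·s_n} for E = {s_n}), is a well-defined bijection satisfying d_{δ_1}(Ψ_c(V_E), Ψ_c(V_F)) = e^{−v(c)} · d_{δ_2}(V_E, V_F) for all V_E, V_F ∈ 𝒱(•,δ_2); in particular, the metric spaces (𝒱(•,δ_1), d_{δ_1}) and (𝒱(•,δ_2), d_{δ_2}) are similar, and 𝒱(•,δ_1) and 𝒱(•,δ_2) are homeomorphic when endowed with the Zariski topology. -/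
open Filter Topology TopologicalSpace Set Polynomial

noncomputable section

namespace PaperPCZar

variable {K : Type*} [Field K]

/-- `expNeg γ = e^{-γ}` for `γ ∈ ℝ ∪ {∞}`, with `e^{-∞} = 0`. -/
def expNeg (γ : WithTop ℝ) : ℝ := WithTop.recTopCoe 0 (fun r => Real.exp (-r)) γ

/-- `v` is a rank-one (i.e. nontrivial, real-valued) valuation. -/
def IsRankOne (v : AddValuation K (WithTop ℝ)) : Prop := ∃ x : K, v x ≠ 0 ∧ v x ≠ ⊤

/-- The value group `Γ_v` of `v`, as a subset of `ℝ`. -/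
def valueGroup (v : AddValuation K (WithTop ℝ)) : Set ℝ := {r : ℝ | ∃ x : K, v x = (r : WithTop ℝ)}

/-- `ℚΓ_v = {q·γ : q ∈ ℚ, γ ∈ Γ_v}`, the divisible hull of the value group inside `ℝ`. -/
def QGamma (v : AddValuation K (WithTop ℝ)) : Set ℝ :=
  {r : ℝ | ∃ (q : ℚ) (γ : ℝ), γ ∈ valueGroup v ∧ r = q * γ}

/-- Order convergence of a sequence in `ℝ ∪ {∞}` to `γ`. -/
def OrdLim (f : ℕ → WithTop ℝ) (γ : WithTop ℝ) : Prop :=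
  (∀ a : WithTop ℝ, a < γ → ∀ᶠ n in atTop, a < f n) ∧
  (∀ b : WithTop ℝ, γ < b → ∀ᶠ n in atTop, f n < b)

/-- `s` is a pseudo-convergent sequence with respect to `v`. -/
def IsPC (v : AddValuation K (WithTop ℝ)) (s : ℕ → K) : Prop :=
  ∀ n, v (s (n + 1) - s n) < v (s (n + 2) - s (n + 1))

/-- `s` is a pseudo-divergent sequence with respect to `v`. -/
def IsPD (v : AddValuation K (WithTop ℝ)) (s : ℕ → K) : Prop :=
  ∀ n, v (s (n + 1) - s (n + 2)) < v (s n - s (n + 1))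

/-- `s` is a pseudo-stationary sequence with respect to `v`. -/
def IsPS (v : AddValuation K (WithTop ℝ)) (s : ℕ → K) : Prop :=
  ∀ n m n' m' : ℕ, n ≠ m → n' ≠ m' → v (s n - s m) = v (s n' - s m')

/-- `δ ∈ ℝ ∪ {∞}` is the breadth of the sequence `s`, i.e. `δ = lim_n v(s_{n+1} - s_n)`. -/
def IsBreadth (v : AddValuation K (WithTop ℝ)) (s : ℕ → K) (δ : WithTop ℝ) : Prop :=
  OrdLim (fun n => v (s (n + 1) - s n)) δ

/-- `α ∈ K` is a pseudo-limit of the pseudo-convergent sequence `s`. -/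
def IsPCLimit (v : AddValuation K (WithTop ℝ)) (s : ℕ → K) (α : K) : Prop :=
  ∀ n, v (α - s n) < v (α - s (n + 1))

/-- `α ∈ K` is a pseudo-limit of the pseudo-divergent sequence `s`. -/
def IsPDLimit (v : AddValuation K (WithTop ℝ)) (s : ℕ → K) (α : K) : Prop :=
  ∀ n, v (α - s (n + 1)) < v (α - s n)

/-- `β ∈ K̄` is a pseudo-limit of `s ⊆ K` with respect to an extension `u` of `v`
to the algebraic closure of `K`. -/
def IsPCLimitAC (u : AddValuation (AlgebraicClosure K) (WithTop ℝ)) (s : ℕ → K)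
    (β : AlgebraicClosure K) : Prop :=
  ∀ n, u (β - algebraMap K (AlgebraicClosure K) (s n)) <
    u (β - algebraMap K (AlgebraicClosure K) (s (n + 1)))

/-- `s` is of transcendental type: for every polynomial `f`, `v(f(s_n))` eventually
stabilizes. -/
def IsTranscendentalType (v : AddValuation K (WithTop ℝ)) (s : ℕ → K) : Prop :=
  ∀ f : Polynomial K, ∃ N, ∀ n ≥ N, v (f.eval (s n)) = v (f.eval (s N))

/-- The ultrametric distance `d(x,y) = e^{-v(x-y)}` on `K`. -/
def dK (v : AddValuation K (WithTop ℝ)) (x y : K) : ℝ := expNeg (v (x - y))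

/-- The set `V_E = {φ ∈ K(X) : φ(s_n) ∈ V for all but finitely many n}`. -/
def VESet (v : AddValuation K (WithTop ℝ)) (s : ℕ → K) : Set (RatFunc K) :=
  {φ : RatFunc K | ∀ᶠ n in atTop, 0 ≤ v (RatFunc.eval (RingHom.id K) (s n) φ)}

/-- `Zar(K(X)|V)`: the valuation subrings of `K(X)` containing (the image of) `V`. -/
def ZarSet (v : AddValuation K (WithTop ℝ)) : Set (ValuationSubring (RatFunc K)) :=
  {W | ∀ x : K, 0 ≤ v x → algebraMap K (RatFunc K) x ∈ W}

/-- `𝒱`: valuation subrings of `K(X)` of the form `V_E`, `E` pseudo-convergent. -/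
def VV (v : AddValuation K (WithTop ℝ)) : Set (ValuationSubring (RatFunc K)) :=
  {W | ∃ s : ℕ → K, IsPC v s ∧ (W : Set (RatFunc K)) = VESet v s}

/-- `𝒱(•,δ)`: those `V_E` with `E` pseudo-convergent of breadth `δ`. -/
def VVδ (v : AddValuation K (WithTop ℝ)) (δ : WithTop ℝ) : Set (ValuationSubring (RatFunc K)) :=
  {W | ∃ s : ℕ → K, IsPC v s ∧ IsBreadth v s δ ∧ (W : Set (RatFunc K)) = VESet v s}

/-- `𝒱_K(•,δ)`: those `V_E` with `E` pseudo-convergent of breadth `δ` having a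
pseudo-limit in `K`. -/
def VVKδ (v : AddValuation K (WithTop ℝ)) (δ : WithTop ℝ) : Set (ValuationSubring (RatFunc K)) :=
  {W | ∃ s : ℕ → K, IsPC v s ∧ IsBreadth v s δ ∧ (∃ α : K, IsPCLimit v s α) ∧
    (W : Set (RatFunc K)) = VESet v s}

/-- `𝒱(β,•)`: those `V_E` with `E` pseudo-convergent having `β ∈ K̄` as a pseudo-limit
with respect to `u`. -/
def VVβ (v : AddValuation K (WithTop ℝ)) (u : AddValuation (AlgebraicClosure K) (WithTop ℝ))
    (β : AlgebraicClosure K) : Set (ValuationSubring (RatFunc K)) :=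
  {W | ∃ s : ℕ → K, IsPC v s ∧ IsPCLimitAC u s β ∧ (W : Set (RatFunc K)) = VESet v s}

/-- `𝒱(β,•)` for a pseudo-limit `β ∈ K`. -/
def VVβK (v : AddValuation K (WithTop ℝ)) (β : K) : Set (ValuationSubring (RatFunc K)) :=
  {W | ∃ s : ℕ → K, IsPC v s ∧ IsPCLimit v s β ∧ (W : Set (RatFunc K)) = VESet v s}

/-- `𝒱_div`: those `V_E` with `E` pseudo-divergent. -/
def VVdiv (v : AddValuation K (WithTop ℝ)) : Set (ValuationSubring (RatFunc K)) :=
  {W | ∃ s : ℕ → K, IsPD v s ∧ (W : Set (RatFunc K)) = VESet v s}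

/-- `𝒱_div(•,δ)`: those `V_E` with `E` pseudo-divergent of breadth `δ`. -/
def VVdivδ (v : AddValuation K (WithTop ℝ)) (δ : WithTop ℝ) : Set (ValuationSubring (RatFunc K)) :=
  {W | ∃ s : ℕ → K, IsPD v s ∧ IsBreadth v s δ ∧ (W : Set (RatFunc K)) = VESet v s}

/-- `𝒱_div(β,•)`: those `V_E` with `E` pseudo-divergent having `β ∈ K` as a pseudo-limit. -/
def VVdivβ (v : AddValuation K (WithTop ℝ)) (β : K) : Set (ValuationSubring (RatFunc K)) :=
  {W | ∃ s : ℕ → K, IsPD v s ∧ IsPDLimit v s β ∧ (W : Set (RatFunc K)) = VESet v s}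

/-- `𝒱_stat(•,δ)`: those `V_E` with `E` pseudo-stationary of breadth `δ`. -/
def VVstatδ (v : AddValuation K (WithTop ℝ)) (δ : WithTop ℝ) :
    Set (ValuationSubring (RatFunc K)) :=
  {W | ∃ s : ℕ → K, (∀ n m : ℕ, n ≠ m → v (s n - s m) = δ) ∧
    (W : Set (RatFunc K)) = VESet v s}

/-- `𝒱_stat(β,•)`: those `V_E` with `E` pseudo-stationary having `β` as a pseudo-limit. -/
def VVstatβ (v : AddValuation K (WithTop ℝ)) (β : K) : Set (ValuationSubring (RatFunc K)) :=
  {W | ∃ (s : ℕ → K) (δ : WithTop ℝ), (∀ n m : ℕ, n ≠ m → v (s n - s m) = δ) ∧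
    (∀ n, δ ≤ v (β - s n)) ∧ (W : Set (RatFunc K)) = VESet v s}

/-- The Zariski topology on the valuation subrings of a field `L`, generated by the
sets `B(φ) = {W : φ ∈ W}`. -/
def zarTop (L : Type*) [Field L] : TopologicalSpace (ValuationSubring L) :=
  generateFrom {U | ∃ φ : L, U = {W : ValuationSubring L | φ ∈ W}}

/-- The constructible topology on the valuation subrings of a field `L`: the coarsest
topology in which all finite intersections `B(φ₁) ∩ ⋯ ∩ B(φ_k)` are open and closed. -/
def consTop (L : Type*) [Field L] : TopologicalSpace (ValuationSubring L) :=
  generateFrom {U | ∃ T : Finset L, U = {W : ValuationSubring L | ∀ φ ∈ T, φ ∈ W} ∨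
    U = {W : ValuationSubring L | ∀ φ ∈ T, φ ∈ W}ᶜ}

/-- The subspace Zariski topology on a set of valuation subrings. -/
def zarSub {L : Type*} [Field L] (S : Set (ValuationSubring L)) : TopologicalSpace ↥S :=
  (zarTop L).induced Subtype.val

/-- The subspace constructible topology on a set of valuation subrings. -/
def consSub {L : Type*} [Field L] (S : Set (ValuationSubring L)) : TopologicalSpace ↥S :=
  (consTop L).induced Subtype.val

/-- `d` is a metric on `X` inducing the topology `t`. -/
def MetrizedBy {X : Type*} (t : TopologicalSpace X) (d : X → X → ℝ) : Prop :=
  (∀ x y, d x y = d y x) ∧ (∀ x y, d x y = 0 ↔ x = y) ∧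
  (∀ x y z, d x z ≤ d x y + d y z) ∧
  t = generateFrom {U : Set X | ∃ (x : X) (ε : ℝ), 0 < ε ∧ U = {y | d x y < ε}}

/-- The topology `t` is metrizable. -/
def IsMetrizable {X : Type*} (t : TopologicalSpace X) : Prop := ∃ d, MetrizedBy t d

/-- The topology `t` is induced by an ultrametric. -/
def IsUltrametrizable {X : Type*} (t : TopologicalSpace X) : Prop :=
  ∃ d, MetrizedBy t d ∧ ∀ x y z, d x z ≤ max (d x y) (d y z)

/-- `dd` computes the distance `d_δ` on `𝒱(•,δ)`:
`d_δ(V_E, V_F) = lim_n max (d(s_n,t_n) - e^{-δ}) 0`. -/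
def IsDistδ (v : AddValuation K (WithTop ℝ)) (δ : WithTop ℝ)
    (dd : ValuationSubring (RatFunc K) → ValuationSubring (RatFunc K) → ℝ) : Prop :=
  ∀ (W W' : ValuationSubring (RatFunc K)) (s t : ℕ → K),
    IsPC v s → IsBreadth v s δ → (W : Set (RatFunc K)) = VESet v s →
    IsPC v t → IsBreadth v t δ → (W' : Set (RatFunc K)) = VESet v t →
    Tendsto (fun n => max (dK v (s n) (t n) - expNeg δ) 0) atTop (𝓝 (dd W W'))

/-- The `Λ`-upper limit topology on the interval `(-∞, b] ⊆ ℝ ∪ {∞}`, generated by the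
half-open intervals `(α, λ]` with `λ ∈ Λ ∪ {∞}`. -/
def upperTopWT (b : WithTop ℝ) (Λ : Set ℝ) : TopologicalSpace {γ : WithTop ℝ // γ ≤ b} :=
  generateFrom {U | ∃ α lam : WithTop ℝ, α ≤ b ∧
    (lam = ⊤ ∨ ∃ r ∈ Λ, lam = (r : WithTop ℝ)) ∧
    U = {γ : {γ : WithTop ℝ // γ ≤ b} | α < (γ : WithTop ℝ) ∧ (γ : WithTop ℝ) ≤ lam}}

/-- The `Λ`-upper limit topology on `(-∞, +∞] = ℝ ∪ {∞}`. -/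
def upperTopAll (Λ : Set ℝ) : TopologicalSpace (WithTop ℝ) :=
  generateFrom {U | ∃ α lam : WithTop ℝ,
    (lam = ⊤ ∨ ∃ r ∈ Λ, lam = (r : WithTop ℝ)) ∧
    U = {γ : WithTop ℝ | α < γ ∧ γ ≤ lam}}

/-- The `Λ`-upper limit topology on an interval `(a, b]` of `ℝ ∪ {±∞}`. -/
def upperTopE (a b : EReal) (Λ : Set ℝ) : TopologicalSpace {x : EReal // a < x ∧ x ≤ b} :=
  generateFrom {U | ∃ α lam : EReal, (a < α ∧ α ≤ b) ∧
    (lam = ⊤ ∨ ∃ r ∈ Λ, lam = (r : EReal)) ∧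
    U = {x : {x : EReal // a < x ∧ x ≤ b} | α < (x : EReal) ∧ (x : EReal) ≤ lam}}


/-- `𝒲`: the valuation domains of the valuations `w_E : φ ↦ lim_n v(φ(s_n))`, as `E`
ranges over the pseudo-convergent sequences for which `w_E` is a valuation. -/
def WW (v : AddValuation K (WithTop ℝ)) : Set (ValuationSubring (RatFunc K)) :=
  {W | ∃ (s : ℕ → K) (w : AddValuation (RatFunc K) (WithTop ℝ)), IsPC v s ∧
    (∀ φ : RatFunc K, OrdLim (fun n => v (RatFunc.eval (RingHom.id K) (s n) φ)) (w φ)) ∧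
    (W : Set (RatFunc K)) = {φ : RatFunc K | 0 ≤ w φ}}

/-!
The substitution `X ↦ c X` is a ring endomorphism `τ_c` of `K(X)` with `(τ_c φ)(x) = φ(c x)`
(evaluating through a reduced fraction, so also at poles), hence `τ_c⁻¹(V_E) = V_{cE}`. Thus `Ψ_c`
is the comap along `τ_c`, with inverse the comap along `τ_{c⁻¹}`; a comap pulls `B(φ)` back to
`B(τ_c φ)`, so both maps are Zariski continuous. Finally `d(c s, c t) = e^{-v(c)} d(s, t)` and
`e^{-δ₁} = e^{-v(c)} e^{-δ₂}`, so every term of the sequence defining `d_{δ₁}` is `e^{-v(c)}`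
times the corresponding term for `d_{δ₂}`.
-/

universe u

lemma injective_compRingHom_C_mul_X {c : K} (hc : c ≠ 0) :
    Function.Injective (compRingHom (C c * X) : K[X] →+* K[X]) :=
  (injective_iff_map_eq_zero _).mpr fun _ hp =>
    (comp_C_mul_X_eq_zero_iff (mem_nonZeroDivisors_of_ne_zero hc)).mp hp

def scaleVar (c : K) (hc : c ≠ 0) : RatFunc K →+* RatFunc K :=
  RatFunc.mapRingHom (compRingHom (C c * X))
    (nonZeroDivisors_le_comap_nonZeroDivisors_of_injective _ (injective_compRingHom_C_mul_X hc))

lemma RatFunc.eval_div_of_isCoprime {F L : Type u} [Field F] [Field L] (f : F →+* L) (a : L)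
    {p q : F[X]} (hpq : IsCoprime p q) (hq : q ≠ 0) :
    RatFunc.eval f a (algebraMap F[X] (RatFunc F) p / algebraMap F[X] (RatFunc F) q) =
      p.eval₂ f a / q.eval₂ f a := by
  set φ := algebraMap F[X] (RatFunc F) p / algebraMap F[X] (RatFunc F) q
  have cross : (φ.num * q).eval₂ f a = (p * φ.denom).eval₂ f a :=
    congrArg _ ((RatFunc.num_mul_eq_mul_denom_iff hq).mpr rfl)
  rw [eval₂_mul, eval₂_mul] at cross
  rw [RatFunc.eval]
  by_cases hqa : q.eval₂ f a = 0
  · -- a common root of `p` and `q` is excluded by coprimality, so `a` is also a pole of `φ`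
    have hpa : p.eval₂ f a ≠ 0 := by
      obtain ⟨u, w, huw⟩ := hpq
      intro hpa
      simpa [hpa, hqa] using congrArg (eval₂ f a) huw
    have hdenom : φ.denom.eval₂ f a = 0 := by
      simpa [hqa, hpa] using cross.symm
    rw [hqa, hdenom, div_zero, div_zero]
  · have hdenom : φ.denom.eval₂ f a ≠ 0 := fun h =>
      hqa (eval₂_eq_zero_of_dvd_of_eval₂_eq_zero f a ((RatFunc.denom_dvd hq).mpr ⟨p, rfl⟩) h)
    rw [div_eq_div_iff hdenom hqa]
    exact cross

lemma eval_scaleVar {c : K} (hc : c ≠ 0) (x : K) (φ : RatFunc K) :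
    RatFunc.eval (RingHom.id K) x (scaleVar c hc φ) = RatFunc.eval (RingHom.id K) (c * x) φ := by
  conv_lhs => rw [← φ.num_div_denom]
  rw [scaleVar, RatFunc.coe_mapRingHom_eq_coe_map, RatFunc.map_apply_div,
    RatFunc.eval_div_of_isCoprime _ _ (φ.isCoprime_num_denom.map _)
      ((map_ne_zero_iff _ (injective_compRingHom_C_mul_X hc)).mpr φ.denom_ne_zero)]
  simp [RatFunc.eval, eval₂_comp]

lemma coe_comap_scaleVar (v : AddValuation K (WithTop ℝ)) {c : K} (hc : c ≠ 0) {s : ℕ → K}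
    {W : ValuationSubring (RatFunc K)} (hW : (W : Set (RatFunc K)) = VESet v s) :
    ((W.comap (scaleVar c hc) : ValuationSubring (RatFunc K)) : Set (RatFunc K)) =
      VESet v (fun n => c * s n) := by
  ext φ
  change scaleVar c hc φ ∈ (W : Set (RatFunc K)) ↔ _
  simp only [hW, VESet, Set.mem_ofPred_eq, eval_scaleVar]

lemma expNeg_nonneg (a : WithTop ℝ) : 0 ≤ expNeg a := by
  induction a with
  | top => exact le_rfl
  | coe r => exact (Real.exp_pos _).le

lemma expNeg_add (a b : WithTop ℝ) : expNeg (a + b) = expNeg a * expNeg b := by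
  induction a with
  | top => simp [expNeg]
  | coe a =>
    induction b with
    | top => simp [expNeg]
    | coe b => exact (congrArg Real.exp (neg_add a b)).trans (Real.exp_add _ _)

lemma dK_mul (v : AddValuation K (WithTop ℝ)) (c x y : K) :
    dK v (c * x) (c * y) = expNeg (v c) * dK v x y := by
  rw [dK, dK, ← mul_sub, v.map_mul, expNeg_add]

lemma WithTop.coe_add_coe_neg_add (r : ℝ) (x : WithTop ℝ) :
    (r : WithTop ℝ) + (((-r : ℝ) : WithTop ℝ) + x) = x := by
  rw [← add_assoc, ← WithTop.coe_add, add_neg_cancel, WithTop.coe_zero, zero_add]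

lemma OrdLim.const_add {f : ℕ → WithTop ℝ} {γ : WithTop ℝ} (h : OrdLim f γ) (r : WithTop ℝ) :
    OrdLim (fun n => r + f n) (r + γ) := by
  induction r with
  | top => exact ⟨fun a ha => Eventually.of_forall fun _ => ha, fun b hb => absurd hb not_top_lt⟩
  | coe r =>
    have shift (x y : WithTop ℝ) : x < (r : WithTop ℝ) + y ↔ ((-r : ℝ) : WithTop ℝ) + x < y := by
      conv_lhs => rw [← WithTop.coe_add_coe_neg_add r x]
      exact WithTop.add_lt_add_iff_left WithTop.coe_ne_top
    have shift' (x y : WithTop ℝ) : (r : WithTop ℝ) + y < x ↔ y < ((-r : ℝ) : WithTop ℝ) + x := by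
      conv_lhs => rw [← WithTop.coe_add_coe_neg_add r x]
      exact WithTop.add_lt_add_iff_left WithTop.coe_ne_top
    refine ⟨fun a ha => ?_, fun b hb => ?_⟩
    · filter_upwards [h.1 _ ((shift a γ).mp ha)] with n hn using (shift a _).mpr hn
    · filter_upwards [h.2 _ ((shift' b γ).mp hb)] with n hn using (shift' b _).mpr hn

lemma IsPC.const_mul {v : AddValuation K (WithTop ℝ)} {s : ℕ → K} (hs : IsPC v s) {c : K}
    (hc : c ≠ 0) : IsPC v (fun n => c * s n) := by
  intro n
  simp only [← mul_sub, v.map_mul]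
  exact WithTop.add_lt_add_left ((v.ne_top_iff).mpr hc) (hs n)

lemma IsBreadth.const_mul {v : AddValuation K (WithTop ℝ)} {s : ℕ → K} {δ : WithTop ℝ}
    (hs : IsBreadth v s δ) (c : K) : IsBreadth v (fun n => c * s n) (v c + δ) := by
  simpa only [IsBreadth, ← mul_sub, v.map_mul] using hs.const_add (v c)

section Scaling

variable (v : AddValuation K (WithTop ℝ)) {δ δ' : WithTop ℝ} {c : K}

lemma comap_scaleVar_mem_VVδ (hc : c ≠ 0) (hδ : v c + δ = δ')
    {W : ValuationSubring (RatFunc K)} (hW : W ∈ VVδ v δ) :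
    W.comap (scaleVar c hc) ∈ VVδ v δ' := by
  obtain ⟨s, hs, hb, hWs⟩ := hW
  exact ⟨_, hs.const_mul hc, hδ ▸ hb.const_mul c, coe_comap_scaleVar v hc hWs⟩

/-- `Ψ_c : V_E ↦ V_{cE}`, realised as the comap along `X ↦ c X`. -/
def scaleVVδ (hc : c ≠ 0) (hδ : v c + δ = δ') : VVδ v δ → VVδ v δ' :=
  fun W => ⟨W.1.comap (scaleVar c hc), comap_scaleVar_mem_VVδ v hc hδ W.2⟩

lemma scaleVVδ_leftInverse (hc : c ≠ 0) (hδ : v c + δ = δ') {c' : K} (hc' : c' ≠ 0)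
    (hδ' : v c' + δ' = δ) (hcc' : c' * c = 1) :
    Function.LeftInverse (scaleVVδ v hc' hδ') (scaleVVδ v hc hδ) := by
  rintro ⟨W, s, -, -, hWs⟩
  apply Subtype.ext
  apply SetLike.coe_injective
  change (((W.comap (scaleVar c hc)).comap (scaleVar c' hc') : ValuationSubring (RatFunc K)) :
    Set (RatFunc K)) = W
  rw [coe_comap_scaleVar v hc' (coe_comap_scaleVar v hc hWs), hWs]
  simp only [← mul_assoc, hcc', one_mul]

lemma IsDistδ.dist_comap_scaleVar (hc : c ≠ 0) (hδ : v c + δ = δ')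
    {d d' : ValuationSubring (RatFunc K) → ValuationSubring (RatFunc K) → ℝ}
    (hd : IsDistδ v δ d) (hd' : IsDistδ v δ' d') {W W' : ValuationSubring (RatFunc K)}
    (hW : W ∈ VVδ v δ) (hW' : W' ∈ VVδ v δ) :
    d' (W.comap (scaleVar c hc)) (W'.comap (scaleVar c hc)) = expNeg (v c) * d W W' := by
  obtain ⟨s, hs, hbs, hWs⟩ := hW
  obtain ⟨t, ht, hbt, hWt⟩ := hW'
  have hscaled := hd' _ _ _ _ (hs.const_mul hc) (hδ ▸ hbs.const_mul c)
    (coe_comap_scaleVar v hc hWs) (ht.const_mul hc) (hδ ▸ hbt.const_mul c)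
    (coe_comap_scaleVar v hc hWt)
  have hterm (n : ℕ) : max (dK v (c * s n) (c * t n) - expNeg δ') 0 =
      expNeg (v c) * max (dK v (s n) (t n) - expNeg δ) 0 := by
    rw [dK_mul, ← hδ, expNeg_add, ← mul_sub, mul_max_of_nonneg _ _ (expNeg_nonneg _), mul_zero]
  simp only [hterm] at hscaled
  exact tendsto_nhds_unique hscaled ((hd _ _ _ _ hs hbs hWs ht hbt hWt).const_mul _)

end Scaling

lemma continuous_zarSub_of_comap {L L' : Type*} [Field L] [Field L'] (τ : L →+* L')
    {S : Set (ValuationSubring L')} {S' : Set (ValuationSubring L)} (f : S → S')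
    (hf : ∀ W, (f W : ValuationSubring L) = (W : ValuationSubring L').comap τ) :
    Continuous[zarSub S, zarSub S'] f := by
  refine continuous_induced_rng.2 (continuous_generateFrom_iff.mpr ?_)
  rintro _ ⟨φ, rfl⟩
  have hpre : (Subtype.val ∘ f) ⁻¹' {W : ValuationSubring L | φ ∈ W} =
      Subtype.val ⁻¹' {W : ValuationSubring L' | τ φ ∈ W} := by
    ext W
    simp only [Set.mem_preimage, Function.comp_apply, Set.mem_ofPred_eq, hf W,
      ValuationSubring.mem_comap]
  rw [hpre]
  exact @isOpen_induced _ _ (zarTop L') Subtype.val _ (isOpen_generateFrom_of_mem ⟨τ φ, rfl⟩)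

theorem statement7_general (v : AddValuation K (WithTop ℝ))
    (δ₁ δ₂ : WithTop ℝ) (c : K) (hc0 : c ≠ 0) (hc : v c + δ₂ = δ₁)
    (dd : WithTop ℝ → ValuationSubring (RatFunc K) → ValuationSubring (RatFunc K) → ℝ)
    (hdd : ∀ δ : WithTop ℝ, IsDistδ v δ (dd δ)) :
    ∃ Ψ : ↥(VVδ v δ₂) → ↥(VVδ v δ₁),
      Function.Bijective Ψ ∧
      (∀ (W : ↥(VVδ v δ₂)) (s : ℕ → K), IsPC v s → IsBreadth v s δ₂ →
        ((W : ValuationSubring (RatFunc K)) : Set (RatFunc K)) = VESet v s →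
        ((Ψ W : ValuationSubring (RatFunc K)) : Set (RatFunc K)) =
          VESet v (fun n => c * s n)) ∧
      (∀ W W' : ↥(VVδ v δ₂),
        dd δ₁ (Ψ W : ValuationSubring (RatFunc K)) (Ψ W' : ValuationSubring (RatFunc K)) =
          expNeg (v c) * dd δ₂ (W : ValuationSubring (RatFunc K))
            (W' : ValuationSubring (RatFunc K))) ∧
      @IsHomeomorph _ _ (zarSub (VVδ v δ₂)) (zarSub (VVδ v δ₁)) Ψ := by
  have hinv : c⁻¹ ≠ 0 := inv_ne_zero hc0
  have hc' : v c⁻¹ + δ₁ = δ₂ := by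
    rw [← hc, ← add_assoc, ← v.map_mul, inv_mul_cancel₀ hc0, v.map_one, zero_add]
  let Ψ := scaleVVδ v hc0 hc
  let Φ := scaleVVδ v hinv hc'
  have hΦΨ : Function.LeftInverse Φ Ψ :=
    scaleVVδ_leftInverse v hc0 hc hinv hc' (inv_mul_cancel₀ hc0)
  have hΨΦ : Function.RightInverse Φ Ψ :=
    scaleVVδ_leftInverse v hinv hc' hc0 hc (mul_inv_cancel₀ hc0)
  refine ⟨Ψ, ⟨hΦΨ.injective, hΨΦ.surjective⟩, fun W s _ _ hWs => coe_comap_scaleVar v hc0 hWs,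
    fun W W' => (hdd δ₂).dist_comap_scaleVar v hc0 hc (hdd δ₁) W.2 W'.2, ?_⟩
  exact (@isHomeomorph_iff_exists_inverse _ _ (zarSub _) (zarSub _) Ψ).mpr
    ⟨continuous_zarSub_of_comap _ Ψ fun _ => rfl, Φ, hΦΨ, hΨΦ,
      continuous_zarSub_of_comap _ Φ fun _ => rfl⟩

/-- If `δ₁ - δ₂ = v(c) ∈ Γ_v`, then `Ψ_c : 𝒱(•,δ₂) → 𝒱(•,δ₁)`,
`V_E ↦ V_{cE}`, is a well-defined bijection scaling the distance by `e^{-v(c)}`; in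
particular the two metric spaces are similar and `𝒱(•,δ₂)`, `𝒱(•,δ₁)` are homeomorphic
under the Zariski topology. -/
theorem statement7 (v : AddValuation K (WithTop ℝ)) (hv : IsRankOne v)
    (δ₁ δ₂ : WithTop ℝ) (c : K) (hc0 : c ≠ 0) (hc : v c + δ₂ = δ₁)
    (dd : WithTop ℝ → ValuationSubring (RatFunc K) → ValuationSubring (RatFunc K) → ℝ)
    (hdd : ∀ δ : WithTop ℝ, IsDistδ v δ (dd δ)) :
    ∃ Ψ : ↥(VVδ v δ₂) → ↥(VVδ v δ₁),
      Function.Bijective Ψ ∧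
      (∀ (W : ↥(VVδ v δ₂)) (s : ℕ → K), IsPC v s → IsBreadth v s δ₂ →
        ((W : ValuationSubring (RatFunc K)) : Set (RatFunc K)) = VESet v s →
        ((Ψ W : ValuationSubring (RatFunc K)) : Set (RatFunc K)) =
          VESet v (fun n => c * s n)) ∧
      (∀ W W' : ↥(VVδ v δ₂),
        dd δ₁ (Ψ W : ValuationSubring (RatFunc K)) (Ψ W' : ValuationSubring (RatFunc K)) =
          expNeg (v c) * dd δ₂ (W : ValuationSubring (RatFunc K))
            (W' : ValuationSubring (RatFunc K))) ∧
      @IsHomeomorph _ _ (zarSub (VVδ v δ₂)) (zarSub (VVδ v δ₁)) Ψ :=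
  statement7_general v δ₁ δ₂ c hc0 hc dd hdd

end PaperPCZar
end
end

section
/- Let β ∈ K̄ and let u be an extension of v to the algebraic closure K̄. Then the set 𝒱(β,•) = {V_E ∈ 𝒱 : β is a pseudo-limit of E with respect to u} is closed in 𝒱 with respect to the Zariski topology. -/
open Filter Topology TopologicalSpace Set Polynomial

noncomputable section

namespace PaperPCZar

variable {K : Type*} [Field K]

/-!
If `β` is not a pseudo-limit of `E = (s_n)`, some step fails, and then
`u(β - s_N) < v(s_{N+1} - s_N) =: v(c)` for some `N`. The rational function `φ = (X - s_N)/c` lies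
in `V_E`, because `v(s_n - s_N) = v(c)` for all `n > N`. If `F = (t_n)` has `β` as pseudo-limit,
the values `u(β - t_n)` increase strictly, so eventually differ from `u(β - s_N)`; the ultrametric
inequality then gives `v(t_n - s_N) ≤ u(β - s_N) < v(c)`, i.e. `φ(t_n) ∉ V`. Hence `B(φ)` is a
Zariski neighbourhood of `V_E` disjoint from `𝒱(β,•)`.
-/

section ValuationLemmas

variable {L : Type*} [Field L] [Algebra K L] {v : AddValuation K (WithTop ℝ)}
  {u : AddValuation L (WithTop ℝ)}

theorem val_sub_le_of_val_ne (hu : ∀ x : K, u (algebraMap K L x) = v x) {β : L} {a b : K}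
    (h : u (β - algebraMap K L b) ≠ u (β - algebraMap K L a)) :
    v (b - a) ≤ u (β - algebraMap K L a) := by
  rw [← hu, map_sub]
  by_contra! hlt
  exact h (by simpa only [sub_sub_sub_cancel_right] using u.map_sub_eq_of_lt_left hlt)

theorem eventually_val_sub_le_of_isPCLimit (hu : ∀ x : K, u (algebraMap K L x) = v x)
    {β : L} {t : ℕ → K}
    (ht : ∀ n, u (β - algebraMap K L (t n)) < u (β - algebraMap K L (t (n + 1)))) (a : K) :
    ∀ᶠ n in atTop, v (t n - a) ≤ u (β - algebraMap K L a) := by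
  have hne : ∀ᶠ n in atTop, u (β - algebraMap K L (t n)) ≠ u (β - algebraMap K L a) := by
    rw [← Nat.cofinite_eq_atTop]
    exact (strictMono_nat_of_lt_succ ht).injective.tendsto_cofinite.eventually
      (eventually_cofinite_ne _)
  exact hne.mono fun _ => val_sub_le_of_val_ne hu

theorem val_inv_mul_nonneg_iff {c : K} (hc : c ≠ 0) (y : K) : 0 ≤ v (c⁻¹ * y) ↔ v c ≤ v y := by
  have hvc : v c ≠ ⊤ := by simpa using hc
  rw [← add_le_add_iff_right_of_ne_top hvc, add_zero, ← v.map_mul, mul_inv_cancel_left₀ hc]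

end ValuationLemmas

def ballRatFunc (a c : K) : RatFunc K := algebraMap K[X] (RatFunc K) (C c⁻¹ * (X - C a))

theorem eval_ballRatFunc (a c x : K) :
    RatFunc.eval (RingHom.id K) x (ballRatFunc a c) = c⁻¹ * (x - a) := by
  rw [ballRatFunc, RatFunc.eval_algebraMap]
  simp

theorem mem_VESet_ballRatFunc_iff {v : AddValuation K (WithTop ℝ)} {s : ℕ → K} {a c : K}
    (hc : c ≠ 0) : ballRatFunc a c ∈ VESet v s ↔ ∀ᶠ n in atTop, v c ≤ v (s n - a) := by
  simp only [VESet, Set.mem_ofPred_eq, eval_ballRatFunc, val_inv_mul_nonneg_iff hc]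

namespace IsPC

variable {L : Type*} [Field L] [Algebra K L] {v : AddValuation K (WithTop ℝ)}
  {u : AddValuation L (WithTop ℝ)} {s : ℕ → K}

theorem strictMono_val (hs : IsPC v s) : StrictMono fun n => v (s (n + 1) - s n) :=
  strictMono_nat_of_lt_succ hs

theorem val_sub_eq_of_lt (hs : IsPC v s) {N n : ℕ} (h : N < n) :
    v (s n - s N) = v (s (N + 1) - s N) := by
  induction n, h using Nat.le_induction with
  | base => rfl
  | succ n hn ih =>
    have hlt : v (s n - s N) < v (s (n + 1) - s n) := ih ▸ hs.strictMono_val hn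
    rw [← sub_add_sub_cancel (s (n + 1)) (s n) (s N), v.map_add_eq_of_lt_right hlt, ih]

theorem exists_val_lt_of_not_isPCLimit (hu : ∀ x : K, u (algebraMap K L x) = v x) {β : L}
    (hs : IsPC v s)
    (hβ : ¬ ∀ n, u (β - algebraMap K L (s n)) < u (β - algebraMap K L (s (n + 1)))) :
    ∃ N, u (β - algebraMap K L (s N)) < v (s (N + 1) - s N) := by
  obtain ⟨n, hn⟩ := not_forall.mp hβ
  replace hn := not_lt.mp hn
  refine ⟨n + 1, lt_of_le_of_lt ?_ (hs n)⟩
  by_contra! hlt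
  rw [← hu, map_sub] at hlt
  have := u.map_add_eq_of_lt_right hlt
  rw [sub_add_sub_cancel] at this
  exact lt_irrefl _ (hlt.trans_le (hn.trans_eq this))

theorem exists_mem_VESet_forall_not_mem (hu : ∀ x : K, u (algebraMap K L x) = v x) {β : L}
    (hs : IsPC v s)
    (hβ : ¬ ∀ n, u (β - algebraMap K L (s n)) < u (β - algebraMap K L (s (n + 1)))) :
    ∃ φ ∈ VESet v s, ∀ t : ℕ → K,
      (∀ n, u (β - algebraMap K L (t n)) < u (β - algebraMap K L (t (n + 1)))) →
      φ ∉ VESet v t := by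
  obtain ⟨N, hN⟩ := hs.exists_val_lt_of_not_isPCLimit hu hβ
  have hc : s (N + 1) - s N ≠ 0 := fun h => ne_top_of_lt (hs N) (by rw [h, v.map_zero])
  refine ⟨ballRatFunc (s N) (s (N + 1) - s N), (mem_VESet_ballRatFunc_iff hc).2 ?_,
    fun t ht hφ => ?_⟩
  · filter_upwards [eventually_gt_atTop N] with n hn using (hs.val_sub_eq_of_lt hn).ge
  · rw [mem_VESet_ballRatFunc_iff hc] at hφ
    obtain ⟨n, hge, hle⟩ := (hφ.and (eventually_val_sub_le_of_isPCLimit hu ht (s N))).exists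
    exact lt_irrefl _ (hN.trans_le (hge.trans hle))

end IsPC

theorem isClosed_zarSub_of_forall_exists_mem {L : Type*} [Field L] {S : Set (ValuationSubring L)}
    {T : Set S}
    (h : ∀ W ∉ T, ∃ φ ∈ (W : ValuationSubring L), ∀ W' ∈ T, φ ∉ (W' : ValuationSubring L)) :
    IsClosed[zarSub S] T := by
  let := zarSub S
  rw [← isOpen_compl_iff, isOpen_iff_forall_mem_open]
  intro W hW
  obtain ⟨φ, hφW, hφT⟩ := h W hW
  refine ⟨{W' | φ ∈ (W' : ValuationSubring L)}, fun W' hW' hW'T => hφT W' hW'T hW', ?_, hφW⟩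
  exact isOpen_induced (t := zarTop L) (isOpen_generateFrom_of_mem ⟨φ, rfl⟩)

theorem statement8_general (v : AddValuation K (WithTop ℝ))
    (u : AddValuation (AlgebraicClosure K) (WithTop ℝ))
    (hu : ∀ x : K, u (algebraMap K (AlgebraicClosure K) x) = v x)
    (β : AlgebraicClosure K) :
    @IsClosed _ (zarSub (VV v))
      {W : ↥(VV v) | (W : ValuationSubring (RatFunc K)) ∈ VVβ v u β} := by
  refine isClosed_zarSub_of_forall_exists_mem fun W hW => ?_
  obtain ⟨s, hs, hsW⟩ := W.2
  obtain ⟨φ, hφs, hφ⟩ := hs.exists_mem_VESet_forall_not_mem hu fun hβ => hW ⟨s, hs, hβ, hsW⟩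
  refine ⟨φ, show φ ∈ ((W : ValuationSubring (RatFunc K)) : Set (RatFunc K)) from hsW ▸ hφs, ?_⟩
  rintro W' ⟨t, -, ht, htW'⟩
  show φ ∉ ((W' : ValuationSubring (RatFunc K)) : Set (RatFunc K))
  rw [htW']
  exact hφ t ht

/-- For `β ∈ K̄` and an extension `u` of `v` to the algebraic closure,
the set `𝒱(β,•)` is closed in `𝒱` with respect to the Zariski topology. -/
theorem statement8 (v : AddValuation K (WithTop ℝ)) (hv : IsRankOne v)
    (u : AddValuation (AlgebraicClosure K) (WithTop ℝ))
    (hu : ∀ x : K, u (algebraMap K (AlgebraicClosure K) x) = v x)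
    (β : AlgebraicClosure K) :
    @IsClosed _ (zarSub (VV v))
      {W : ↥(VV v) | (W : ValuationSubring (RatFunc K)) ∈ VVβ v u β} :=
  statement8_general v u hu β

end PaperPCZar
end
end

section
/- Let a < b in ℝ∪{±∞} and let Λ be a subset of (a,b] that is dense in (a,b] with respect to the Euclidean topology. Then the following are equivalent for the space (a,b]_Λ (the interval (a,b] with the Λ-upper limit topology): (i) Λ is countable; (ii) (a,b]_Λ is second-countable; (iii) (a,b]_Λ is metrizable; (iv) the topology of (a,b]_Λ is induced by an ultrametric. -/
/-!
If `Λ = {λ₀, λ₁, …}` is countable, density of `Λ` shows that the clopen sets `{x ≤ λₙ}` and their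
complements generate the topology of `(a,b]_Λ` and separate its points, so `x ↦ (x ≤ λₙ)ₙ` embeds
`(a,b]_Λ` into the Cantor space `ℕ → Bool`, whose metric `2^(-first difference)` is an
ultrametric. Conversely, every open set containing `x` contains some `(α, x]`, so the rational
points are dense and a metrizable `(a,b]_Λ` is second-countable. In a second-countable space, a
basic open set `B` with `λ ∈ B ⊆ (a, λ]` can be chosen for each `λ ∈ Λ`, and `λ = max B`, so `Λ`
is countable.
-/

open Filter Topology TopologicalSpace Set Polynomial

noncomputable section

namespace PaperPCZar

variable {K : Type*} [Field K]

section Metrization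

variable {X : Type*}

theorem metrizedBy_dist [MetricSpace X] : MetrizedBy (inferInstance : TopologicalSpace X) dist := by
  refine ⟨dist_comm, fun _ _ => dist_eq_zero, dist_triangle, ?_⟩
  refine (isTopologicalBasis_of_isOpen_of_nhds ?_ fun x U hx hU => ?_).eq_generateFrom
  · rintro _ ⟨x, ε, -, rfl⟩
    simp_rw [dist_comm x]
    exact Metric.isOpen_ball
  · obtain ⟨ε, hε, hball⟩ := Metric.isOpen_iff.mp hU x hx
    refine ⟨_, ⟨x, ε, hε, rfl⟩, by simpa using hε, fun y hy => hball ?_⟩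
    simpa [dist_comm] using hy

theorem MetrizedBy.exists_metricSpace {t : TopologicalSpace X} {d : X → X → ℝ}
    (h : MetrizedBy t d) : ∃ m : MetricSpace X, m.toUniformSpace.toTopologicalSpace = t := by
  obtain ⟨hsymm, hzero, htri, ht⟩ := h
  let m : MetricSpace X :=
    { dist := d
      dist_self := fun x => (hzero x x).mpr rfl
      dist_comm := hsymm
      dist_triangle := htri
      eq_of_dist_eq_zero := (hzero _ _).mp }
  exact ⟨m, (metrizedBy_dist (X := X)).2.2.2.trans ht.symm⟩

theorem MetrizedBy.secondCountableTopology {t : TopologicalSpace X} {d : X → X → ℝ}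
    (h : MetrizedBy t d) [SeparableSpace X] : SecondCountableTopology X := by
  obtain ⟨m, rfl⟩ := h.exists_metricSpace
  exact UniformSpace.secondCountable_of_separable X

end Metrization

section CantorEmbedding

variable {X : Type*}

open Classical in
theorem induced_decide_mem_eq_generateFrom {ι : Type*} (S : ι → Set X) :
    induced (fun x i => decide (x ∈ S i)) Pi.topologicalSpace =
      generateFrom (range S ∪ range fun i => (S i)ᶜ) := by
  let := generateFrom (range S ∪ range fun i => (S i)ᶜ)
  refine le_antisymm (le_generateFrom ?_) (continuous_iff_le_induced.mp ?_)
  · rintro _ (⟨i, rfl⟩ | ⟨i, rfl⟩)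
    · exact ⟨(· i) ⁻¹' {true}, (isOpen_discrete _).preimage (continuous_apply i), by ext; simp⟩
    · exact ⟨(· i) ⁻¹' {false}, (isOpen_discrete _).preimage (continuous_apply i), by ext; simp⟩
  · refine continuous_pi fun i => continuous_discrete_rng.mpr ?_
    rintro (_ | _)
    · exact .basic _ (Or.inr ⟨i, by ext; simp⟩)
    · exact .basic _ (Or.inl ⟨i, by ext; simp⟩)

theorem isUltrametrizable_generateFrom (S : ℕ → Set X)
    (hS : ∀ x y, (∀ n, x ∈ S n ↔ y ∈ S n) → x = y) :
    IsUltrametrizable (generateFrom (range S ∪ range fun n => (S n)ᶜ)) := by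
  classical
  let f : X → ℕ → Bool := fun x n => decide (x ∈ S n)
  have hf : Function.Injective f := fun x y hxy =>
    hS x y fun n => by simpa [f] using congrFun hxy n
  let _ : MetricSpace (ℕ → Bool) := PiNat.metricSpace
  let _ : MetricSpace X := MetricSpace.induced f hf inferInstance
  refine ⟨dist, ?_, fun x y z => PiNat.dist_triangle_nonarch (f x) (f y) (f z)⟩
  rw [← induced_decide_mem_eq_generateFrom]
  exact metrizedBy_dist

end CantorEmbedding

theorem countable_setOf_isOpen_Iic {Y : Type*} [TopologicalSpace Y] [SecondCountableTopology Y]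
    [PartialOrder Y] : {y : Y | IsOpen (Iic y)}.Countable := by
  obtain ⟨B, hBc, -, hB⟩ := exists_countable_basis Y
  choose! V hVB hyV hVsub using fun y (hy : IsOpen (Iic y)) =>
    hB.exists_subset_of_mem_open (mem_Iic.mpr le_rfl) hy
  refine MapsTo.countable_of_injOn hVB (fun y hy z hz hyz => ?_) hBc
  exact le_antisymm (hVsub z hz (hyz ▸ hyV y hy)) (hVsub y hy (hyz ▸ hyV z hz))

section UpperLimitTopology

variable {a b : EReal} {Λ : Set ℝ}

theorem exists_mem_between
    (hΛdense : ∀ x : EReal, a < x → x ≤ b → x ∈ closure ((fun r : ℝ => (r : EReal)) '' Λ))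
    {x y : EReal} (hax : a < x) (hxy : x < y) (hyb : y ≤ b) :
    ∃ l ∈ Λ, x < (l : EReal) ∧ (l : EReal) < y := by
  obtain ⟨m, hxm, hmy⟩ := exists_between hxy
  obtain ⟨_, ⟨hxl, hly⟩, l, hl, rfl⟩ :=
    mem_closure_iff.mp (hΛdense m (hax.trans hxm) (hmy.le.trans hyb)) _ isOpen_Ioo ⟨hxm, hmy⟩
  exact ⟨l, hl, hxl, hly⟩

theorem isOpen_le_coe {l : ℝ} (hl : l ∈ Λ) :
    IsOpen[upperTopE a b Λ] {x : {x : EReal // a < x ∧ x ≤ b} | (x : EReal) ≤ l} := by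
  let := upperTopE a b Λ
  refine isOpen_iff_forall_mem_open.mpr fun x hx => ?_
  obtain ⟨α, haα, hαx⟩ := exists_between x.2.1
  refine ⟨{y | α < (y : EReal) ∧ (y : EReal) ≤ l}, fun y hy => hy.2, ?_, hαx, hx⟩
  exact .basic _ ⟨α, l, ⟨haα, (hαx.trans_le x.2.2).le⟩, .inr ⟨l, hl, rfl⟩, rfl⟩

theorem isOpen_lt_coe {α : EReal} (hα : a < α ∧ α ≤ b) :
    IsOpen[upperTopE a b Λ] {x : {x : EReal // a < x ∧ x ≤ b} | α < (x : EReal)} := by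
  have hsub : {x : {x : EReal // a < x ∧ x ≤ b} | α < (x : EReal)} =
      {x : {x : EReal // a < x ∧ x ≤ b} | α < (x : EReal) ∧ (x : EReal) ≤ ⊤} := by
    simp only [le_top, and_true]
  exact hsub ▸ .basic _ ⟨α, ⊤, hα, .inl rfl, rfl⟩

theorem upperTopE_eq_generateFrom (hΛmem : ∀ r ∈ Λ, a < (r : EReal) ∧ (r : EReal) ≤ b)
    (hΛdense : ∀ x : EReal, a < x → x ≤ b → x ∈ closure ((fun r : ℝ => (r : EReal)) '' Λ))
    {e : ℕ → ℝ} (he : range e = Λ) :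
    upperTopE a b Λ = generateFrom
      (range (fun n => {x : {x : EReal // a < x ∧ x ≤ b} | (x : EReal) ≤ e n}) ∪
        range fun n => {x : {x : EReal // a < x ∧ x ≤ b} | (x : EReal) ≤ e n}ᶜ) := by
  subst he
  refine le_antisymm (le_generateFrom ?_) (le_generateFrom ?_)
  · rintro _ (⟨n, rfl⟩ | ⟨n, rfl⟩)
    · exact isOpen_le_coe (mem_range_self n)
    · simpa only [compl_ofPred, not_le] using isOpen_lt_coe (hΛmem _ (mem_range_self n))
  · let := generateFrom
      (range (fun n => {x : {x : EReal // a < x ∧ x ≤ b} | (x : EReal) ≤ e n}) ∪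
        range fun n => {x : {x : EReal // a < x ∧ x ≤ b} | (x : EReal) ≤ e n}ᶜ)
    rintro U ⟨α, lam, ⟨haα, -⟩, hlam, rfl⟩
    refine isOpen_iff_forall_mem_open.mpr fun x ⟨hαx, hxlam⟩ => ?_
    obtain ⟨_, ⟨n, rfl⟩, hαl, hlx⟩ := exists_mem_between hΛdense haα hαx x.2.2
    have hlt : IsOpen {y : {x : EReal // a < x ∧ x ≤ b} | (e n : EReal) < y} := by
      have hcompl : IsOpen {y : {x : EReal // a < x ∧ x ≤ b} | (y : EReal) ≤ e n}ᶜ :=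
        isOpen_generateFrom_of_mem (.inr (mem_range_self n))
      simpa only [compl_ofPred, not_le] using hcompl
    rcases hlam with rfl | ⟨_, ⟨m, rfl⟩, rfl⟩
    · exact ⟨_, fun y hy => ⟨hαl.trans hy, le_top⟩, hlt, hlx⟩
    · exact ⟨_, fun y hy => ⟨hαl.trans hy.1, hy.2⟩,
        hlt.inter (isOpen_generateFrom_of_mem (.inl ⟨m, rfl⟩)), hlx, hxlam⟩

theorem eq_of_forall_le_coe_iff
    (hΛdense : ∀ x : EReal, a < x → x ≤ b → x ∈ closure ((fun r : ℝ => (r : EReal)) '' Λ))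
    {x y : {x : EReal // a < x ∧ x ≤ b}} (h : ∀ l ∈ Λ, (x : EReal) ≤ l ↔ (y : EReal) ≤ l) :
    x = y := by
  have hle : ∀ {x y : {x : EReal // a < x ∧ x ≤ b}},
      (∀ l ∈ Λ, (x : EReal) ≤ l ↔ (y : EReal) ≤ l) → x ≤ y := by
    intro x y h
    by_contra! hyx
    obtain ⟨l, hl, hyl, hlx⟩ := exists_mem_between hΛdense y.2.1 hyx x.2.2
    exact ((h l hl).mpr hyl.le).not_gt hlx
  exact le_antisymm (hle h) (hle fun l hl => (h l hl).symm)

theorem isUltrametrizable_upperTopE (hab : a < b)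
    (hΛmem : ∀ r ∈ Λ, a < (r : EReal) ∧ (r : EReal) ≤ b)
    (hΛdense : ∀ x : EReal, a < x → x ≤ b → x ∈ closure ((fun r : ℝ => (r : EReal)) '' Λ))
    (hc : Λ.Countable) : IsUltrametrizable (upperTopE a b Λ) := by
  have hne : Λ.Nonempty := (closure_nonempty_iff.mp ⟨b, hΛdense b hab le_rfl⟩).of_image
  obtain ⟨e, rfl⟩ := hc.exists_eq_range hne
  rw [upperTopE_eq_generateFrom hΛmem hΛdense rfl]
  exact isUltrametrizable_generateFrom _ fun x y hxy =>
    eq_of_forall_le_coe_iff hΛdense (forall_mem_range.mpr hxy)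

theorem exists_Ioc_subset_of_isOpen {U : Set {x : EReal // a < x ∧ x ≤ b}}
    (hU : IsOpen[upperTopE a b Λ] U) {x : {x : EReal // a < x ∧ x ≤ b}} (hx : x ∈ U) :
    ∃ α, a ≤ α ∧ α < (x : EReal) ∧ Subtype.val ⁻¹' Ioc α (x : EReal) ⊆ U := by
  induction hU generalizing x with
  | basic V hV =>
    obtain ⟨α, lam, ⟨haα, -⟩, -, rfl⟩ := hV
    exact ⟨α, haα.le, hx.1, fun y hy => ⟨hy.1, hy.2.trans hx.2⟩⟩
  | univ => exact ⟨a, le_rfl, x.2.1, subset_univ _⟩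
  | inter V W _ _ ihV ihW =>
    obtain ⟨α, haα, hαx, hV⟩ := ihV hx.1
    obtain ⟨β, haβ, hβx, hW⟩ := ihW hx.2
    exact ⟨max α β, le_max_of_le_left haα, max_lt hαx hβx, fun y ⟨hy, hyx⟩ =>
      ⟨hV ⟨(le_max_left α β).trans_lt hy, hyx⟩, hW ⟨(le_max_right α β).trans_lt hy, hyx⟩⟩⟩
  | sUnion S _ ih =>
    obtain ⟨V, hVS, hxV⟩ := hx
    obtain ⟨α, haα, hαx, hV⟩ := ih V hVS hxV
    exact ⟨α, haα, hαx, fun _ hy => ⟨V, hVS, hV hy⟩⟩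

theorem separableSpace_upperTopE :
    @SeparableSpace {x : EReal // a < x ∧ x ≤ b} (upperTopE a b Λ) := by
  let := upperTopE a b Λ
  refine ⟨Subtype.val ⁻¹' range (fun q : ℚ => ((q : ℝ) : EReal)),
    (countable_range _).preimage Subtype.val_injective,
    dense_iff_inter_open.mpr fun U hU ⟨x, hx⟩ => ?_⟩
  obtain ⟨α, haα, hαx, hsub⟩ := exists_Ioc_subset_of_isOpen hU hx
  obtain ⟨q, hαq, hqx⟩ := EReal.exists_rat_btwn_of_lt hαx
  exact ⟨⟨(q : ℝ), haα.trans_lt hαq, hqx.le.trans x.2.2⟩, hsub ⟨hαq, hqx.le⟩, q, rfl⟩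

theorem countable_of_secondCountable_upperTopE
    (hΛmem : ∀ r ∈ Λ, a < (r : EReal) ∧ (r : EReal) ≤ b)
    (h : @SecondCountableTopology {x : EReal // a < x ∧ x ≤ b} (upperTopE a b Λ)) :
    Λ.Countable := by
  let := upperTopE a b Λ
  have hIic : {x : {x : EReal // a < x ∧ x ≤ b} | IsOpen (Iic x)}.Countable :=
    countable_setOf_isOpen_Iic
  refine Set.Countable.mono (fun l hl => ?_)
    ((hIic.image Subtype.val).preimage EReal.coe_injective)
  exact ⟨⟨l, hΛmem l hl⟩, isOpen_le_coe hl, rfl⟩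

end UpperLimitTopology

/-- For `Λ ⊆ (a,b]` dense in the Euclidean topology, the space
`(a,b]_Λ` (with the `Λ`-upper limit topology) is second-countable iff metrizable iff
ultrametrizable iff `Λ` is countable. -/
theorem statement12 (a b : EReal) (hab : a < b) (Λ : Set ℝ)
    (hΛmem : ∀ r ∈ Λ, a < (r : EReal) ∧ (r : EReal) ≤ b)
    (hΛdense : ∀ x : EReal, a < x → x ≤ b →
      x ∈ closure ((fun r : ℝ => (r : EReal)) '' Λ)) :
    List.TFAE [Λ.Countable,
      @SecondCountableTopology {x : EReal // a < x ∧ x ≤ b} (upperTopE a b Λ),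
      IsMetrizable (upperTopE a b Λ),
      IsUltrametrizable (upperTopE a b Λ)] := by
  tfae_have 1 → 4 := isUltrametrizable_upperTopE hab hΛmem hΛdense
  tfae_have 4 → 3 := fun ⟨d, hd, _⟩ => ⟨d, hd⟩
  tfae_have 3 → 2 := fun ⟨_, hd⟩ =>
    @MetrizedBy.secondCountableTopology _ _ _ hd separableSpace_upperTopE
  tfae_have 2 → 1 := countable_of_secondCountable_upperTopE hΛmem
  tfae_finish

end PaperPCZar
end
end

section
/- Let V be a rank-one valuation domain whose value group Γ_v is uncountable. Then 𝒱 (with the Zariski topology) is not metrizable, and Zar(K(X)|V) endowed with the constructible topology is not metrizable. -/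
open Filter Topology TopologicalSpace Set Polynomial

noncomputable section

namespace PaperPCZar

variable {K : Type*} [Field K]

/-!
For each real `δ` pick a pseudo-convergent sequence `E_δ` with `v(s_n)` increasing to `δ`; this is
possible because an uncountable subgroup of `ℝ` is dense. Just below `δ`, `v(φ(x))` is an affine
function of `v(x)` (one monomial of the numerator and one of the denominator dominate), so whether
`φ ∈ V_{E_δ'}` does not change for `δ'` in a left neighbourhood of `δ`: the map `δ ↦ V_{E_δ}` is
left-continuous for the constructible, hence also for the Zariski, topology. On the other hand,
for `δ = v(a) ∈ Γ_v` the open set `B(a/X)` contains `V_{E_δ}` but no `V_{E_δ'}` with `δ' > δ`.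
In a metrizable space the image of a left-continuous map on `ℝ` is separable, hence second
countable, and a second countable space has no uncountable family separated in this one-sided way.
-/

local notation "ev" => RatFunc.eval (RingHom.id K)

theorem eventually_nonneg_or_eventually_neg_affine (A B δ : ℝ) :
    (∀ᶠ t in 𝓝[<] δ, 0 ≤ A + B * t) ∨ ∀ᶠ t in 𝓝[<] δ, A + B * t < 0 := by
  have hcont : Tendsto (fun t => A + B * t) (𝓝[<] δ) (𝓝 (A + B * δ)) :=
    (Continuous.tendsto (by fun_prop) δ).mono_left nhdsWithin_le_nhds
  rcases lt_trichotomy (A + B * δ) 0 with h | h | h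
  · exact .inr (hcont.eventually (gt_mem_nhds h))
  · rcases le_or_gt B 0 with hB | hB
    · exact .inl (eventually_nhdsWithin_of_forall fun t (ht : t < δ) => by nlinarith)
    · exact .inr (eventually_nhdsWithin_of_forall fun t (ht : t < δ) => by nlinarith)
  · exact .inl (hcont.eventually (lt_mem_nhds h) |>.mono fun _ => le_of_lt)

theorem eventually_nhdsLE_eventually_nhdsLT {p : ℝ → Prop} {δ : ℝ}
    (h : ∀ᶠ t in 𝓝[<] δ, p t) : ∀ᶠ δ' in 𝓝[≤] δ, ∀ᶠ t in 𝓝[<] δ', p t := by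
  obtain ⟨β, hβ, hsub⟩ := mem_nhdsLT_iff_exists_Ioo_subset.1 h
  filter_upwards [Ioc_mem_nhdsLE hβ] with δ' hδ'
  exact mem_of_superset (Ioo_mem_nhdsLT hδ'.1) (Ioo_subset_Ioo_right hδ'.2 |>.trans hsub)

theorem MetrizedBy.isOpen_iff {X : Type*} {t : TopologicalSpace X} {d : X → X → ℝ}
    (hd : MetrizedBy t d) (U : Set X) :
    IsOpen[t] U ↔ ∀ x ∈ U, ∃ ε > 0, ∀ y, d x y < ε → y ∈ U := by
  obtain ⟨-, hzero, htri, rfl⟩ := hd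
  refine ⟨fun hU => ?_, fun hU => ?_⟩
  · induction hU with
    | basic U hU =>
      obtain ⟨z, ε, -, rfl⟩ := hU
      intro x (hx : d z x < ε)
      refine ⟨ε - d z x, sub_pos.2 hx, fun y hy => ?_⟩
      show d z y < ε
      linarith [htri z x y]
    | univ => exact fun _ _ => ⟨1, one_pos, fun _ _ => trivial⟩
    | inter U V _ _ ihU ihV =>
      rintro x ⟨hxU, hxV⟩
      obtain ⟨ε₁, hε₁, h₁⟩ := ihU x hxU
      obtain ⟨ε₂, hε₂, h₂⟩ := ihV x hxV
      exact ⟨min ε₁ ε₂, lt_min hε₁ hε₂, fun y hy =>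
        ⟨h₁ y (hy.trans_le (min_le_left _ _)), h₂ y (hy.trans_le (min_le_right _ _))⟩⟩
    | sUnion S _ ih =>
      rintro x ⟨U, hUS, hxU⟩
      obtain ⟨ε, hε, h⟩ := ih U hUS x hxU
      exact ⟨ε, hε, fun y hy => ⟨U, hUS, h y hy⟩⟩
  · refine (@isOpen_iff_forall_mem_open X (generateFrom _) U).2 fun x hx => ?_
    obtain ⟨ε, hε, h⟩ := hU x hx
    exact ⟨{y | d x y < ε}, h, isOpen_generateFrom_of_mem ⟨x, ε, hε, rfl⟩,
      show d x x < ε by rwa [(hzero x x).2 rfl]⟩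

theorem MetrizedBy.pseudoMetrizableSpace {X : Type*} {t : TopologicalSpace X} {d : X → X → ℝ}
    (hd : MetrizedBy t d) : @PseudoMetrizableSpace X t :=
  let := t
  letI := PseudoMetricSpace.ofDistTopology d (fun x => (hd.2.1 x x).2 rfl) hd.1 hd.2.2.1
    hd.isOpen_iff
  inferInstance

theorem countable_of_rightSeparated {X ι : Type*} [TopologicalSpace X] [SecondCountableTopology X]
    [LinearOrder ι] (x : ι → X) (I : Set ι)
    (hsep : ∀ i ∈ I, ∃ U ∈ 𝓝 (x i), ∀ j ∈ I, i < j → x j ∉ U) : I.Countable := by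
  obtain ⟨B, hBc, -, hB⟩ := exists_countable_basis X
  have : ∀ i : I, ∃ b : B, x i ∈ (b : Set X) ∧ ∀ j ∈ I, i < j → x j ∉ (b : Set X) := fun i => by
    obtain ⟨U, hU, hUsep⟩ := hsep i i.2
    obtain ⟨b, hbB, hxb, hbU⟩ := hB.mem_nhds_iff.1 hU
    exact ⟨⟨b, hbB⟩, hxb, fun j hj hij hxj => hUsep j hj hij (hbU hxj)⟩
  choose b hxb hbsep using this
  have : Countable B := hBc.to_subtype
  refine countable_coe_iff.1 (Function.Injective.countable (f := b) fun i j hij => ?_)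
  by_contra hne
  rcases lt_or_gt_of_ne (Subtype.coe_ne_coe.2 hne) with h | h
  · exact hbsep i j j.2 h (hij ▸ hxb j)
  · exact hbsep j i i.2 h (hij ▸ hxb i)

/-- The image of `p` lies in the closure of the countable set `p '' ℚ`. -/
theorem countable_of_leftContinuous_rightSeparated {X : Type*} [TopologicalSpace X]
    [PseudoMetrizableSpace X] (p : ℝ → X) (hp : ∀ δ, ContinuousWithinAt p (Iic δ) δ)
    (I : Set ℝ) (hsep : ∀ δ ∈ I, ∃ U ∈ 𝓝 (p δ), ∀ δ' ∈ I, δ < δ' → p δ' ∉ U) :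
    I.Countable := by
  set S := closure (range fun q : ℚ => p q)
  have hS : ∀ δ, p δ ∈ S := fun δ => by
    obtain ⟨u, -, hlt, hlim⟩ := Real.exists_seq_rat_strictMono_tendsto δ
    exact mem_closure_of_tendsto ((hp δ).tendsto.comp (tendsto_nhdsWithin_iff.2
      ⟨hlim, .of_forall fun n => (hlt n).le⟩)) (.of_forall fun n => mem_range_self (u n))
  have : SecondCountableTopology S :=
    ((countable_range _).isSeparable.closure).secondCountableTopology
  refine countable_of_rightSeparated (fun δ => (⟨p δ, hS δ⟩ : S)) I fun δ hδ => ?_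
  obtain ⟨U, hU, hUsep⟩ := hsep δ hδ
  exact ⟨Subtype.val ⁻¹' U, continuous_subtype_val.continuousAt.preimage_mem_nhds hU, hUsep⟩

theorem isOpen_mem_consTop {L : Type*} [Field L] (φ : L) :
    IsOpen[consTop L] {W : ValuationSubring L | φ ∈ W} :=
  isOpen_generateFrom_of_mem ⟨{φ}, .inl (by simp)⟩

theorem consTop_le_zarTop (L : Type*) [Field L] : consTop L ≤ zarTop L :=
  le_generateFrom fun _ ⟨φ, hU⟩ => hU ▸ isOpen_mem_consTop φ

section Valuation

variable (v : AddValuation K (WithTop ℝ))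

theorem exists_affine_valuation_eval (f : K[X]) (hf : f ≠ 0) (δ : ℝ) :
    ∃ (A : ℝ) (B : ℕ), ∀ᶠ t : ℝ in 𝓝[<] δ,
      ∀ x : K, v x = t → v (f.eval x) = ((A + B * t : ℝ) : WithTop ℝ) := by
  classical
  set c : ℕ → ℝ := fun i => (v (f.coeff i)).untopD 0
  have hc : ∀ i ∈ f.support, v (f.coeff i) = c i := fun i hi => by
    obtain ⟨a, ha⟩ := WithTop.ne_top_iff_exists.1 ((v.ne_top_iff).2 (mem_support_iff.1 hi))
    simp [c, ← ha]
  -- The dominant monomial just below `δ`: least `c i + i δ`, and among those the largest `i`.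
  obtain ⟨i₀, hi₀, hmin⟩ := f.support.exists_min_image
    (fun i => toLex (c i + i * δ, -(i : ℤ))) (nonempty_support_iff.2 hf)
  have hdom : ∀ i ∈ f.support.erase i₀, ∀ᶠ t in 𝓝[<] δ, c i₀ + i₀ * t < c i + i * t := by
    intro i hi
    have hlt : toLex (c i₀ + i₀ * δ, -(i₀ : ℤ)) < toLex (c i + i * δ, -(i : ℤ)) :=
      (hmin i (Finset.mem_of_mem_erase hi)).lt_of_ne fun h =>
        Finset.ne_of_mem_erase hi (by simpa using congrArg (fun p => (ofLex p).2) h.symm)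
    rcases Prod.Lex.toLex_lt_toLex.1 hlt with hδ | ⟨hδ, hi⟩
    · have hlim : ∀ j : ℕ, Tendsto (fun t => c j + j * t) (𝓝[<] δ) (𝓝 (c j + j * δ)) :=
        fun j => (Continuous.tendsto (by fun_prop) δ).mono_left nhdsWithin_le_nhds
      exact (hlim i₀).eventually_lt (hlim i) hδ
    · refine eventually_nhdsWithin_of_forall fun t (ht : t < δ) => ?_
      have : (i : ℝ) < i₀ := by exact_mod_cast (neg_lt_neg_iff.1 hi)
      nlinarith
  refine ⟨c i₀, i₀, ((Filter.eventually_all_finset _).2 hdom).mono fun t ht x hx => ?_⟩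
  have hterm : ∀ i ∈ f.support, v (f.coeff i * x ^ i) = ↑(c i + i * t) := fun i hi => by
    rw [AddValuation.map_mul, AddValuation.map_pow, hx, hc i hi, ← WithTop.coe_nsmul,
      ← WithTop.coe_add, nsmul_eq_mul]
  have hlt : v (f.coeff i₀ * x ^ i₀) < v (∑ i ∈ f.support.erase i₀, f.coeff i * x ^ i) := by
    rw [hterm i₀ hi₀]
    refine AddValuation.map_lt_sum v WithTop.coe_ne_top fun i hi => ?_
    rw [hterm i (Finset.mem_of_mem_erase hi)]
    exact_mod_cast ht i hi
  rw [eval_eq_sum, Polynomial.sum_def, ← Finset.add_sum_erase _ _ hi₀,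
    AddValuation.map_add_eq_of_lt_left v hlt, hterm i₀ hi₀]

theorem exists_affine_valuation_ratFunc_eval (φ : RatFunc K) (hφ : φ ≠ 0) (δ : ℝ) :
    ∃ A B : ℝ, ∀ᶠ t : ℝ in 𝓝[<] δ, ∀ x : K, v x = t →
      v (ev x φ) = ((A + B * t : ℝ) : WithTop ℝ) := by
  obtain ⟨A₁, B₁, h₁⟩ := exists_affine_valuation_eval v φ.num (RatFunc.num_ne_zero hφ) δ
  obtain ⟨A₂, B₂, h₂⟩ := exists_affine_valuation_eval v φ.denom (RatFunc.denom_ne_zero φ) δ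
  refine ⟨A₁ - A₂, B₁ - B₂, (h₁.and h₂).mono fun t ⟨ht₁, ht₂⟩ x hx => ?_⟩
  change v (φ.num.eval x / φ.denom.eval x) = _
  rw [AddValuation.map_div, ht₁ x hx, ht₂ x hx, ← WithTop.LinearOrderedAddCommGroup.coe_sub]
  congr 1
  ring

theorem exists_eventually_valuation_eval_nonneg_iff (φ : RatFunc K) (δ : ℝ) :
    ∃ P : Prop, ∀ᶠ t : ℝ in 𝓝[<] δ, ∀ x : K, v x = t →
      (0 ≤ v (ev x φ) ↔ P) := by
  rcases eq_or_ne φ 0 with rfl | hφ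
  · exact ⟨True, .of_forall fun _ _ _ => by simp⟩
  obtain ⟨A, B, h⟩ := exists_affine_valuation_ratFunc_eval v φ hφ δ
  rcases eventually_nonneg_or_eventually_neg_affine A B δ with hs | hs
  · refine ⟨True, (h.and hs).mono fun t ⟨ht, hst⟩ x hx => ?_⟩
    rw [ht x hx]
    exact iff_true_intro (by exact_mod_cast hst)
  · refine ⟨False, (h.and hs).mono fun t ⟨ht, hst⟩ x hx => ?_⟩
    rw [ht x hx]
    exact iff_false_intro (not_le.2 (by exact_mod_cast hst))

def valueAddSubgroup : AddSubgroup ℝ where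
  carrier := valueGroup v
  zero_mem' := ⟨1, by simp⟩
  add_mem' := fun ⟨x, hx⟩ ⟨y, hy⟩ => ⟨x * y, by rw [AddValuation.map_mul, hx, hy, WithTop.coe_add]⟩
  neg_mem' := fun ⟨x, hx⟩ =>
    ⟨x⁻¹, by rw [AddValuation.map_inv, hx, WithTop.LinearOrderedAddCommGroup.coe_neg]⟩

theorem dense_valueGroup (hΓ : ¬ (valueGroup v).Countable) : Dense (valueGroup v) :=
  (valueAddSubgroup v).dense_or_cyclic.resolve_right fun ⟨a, ha⟩ => hΓ <|
    (countable_range fun n : ℤ => n • a).mono fun _ hx =>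
      AddSubgroup.mem_closure_singleton.1 (ha ▸ hx)

end Valuation

/-- The simplest pseudo-convergent sequences of breadth `δ`: `v(s n) = γ n` with `γ n ↑ δ`. -/
structure RisingSeq (v : AddValuation K (WithTop ℝ)) (δ : ℝ) where
  s : ℕ → K
  γ : ℕ → ℝ
  valuation_s : ∀ n, v (s n) = γ n
  strictMono_γ : StrictMono γ
  tendsto_γ : Tendsto γ atTop (𝓝[<] δ)

namespace RisingSeq

variable {v : AddValuation K (WithTop ℝ)}

theorem nonempty_of_dense (hd : Dense (valueGroup v)) (δ : ℝ) : Nonempty (RisingSeq v δ) := by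
  obtain ⟨γ, hmono, hmem, hlim⟩ := hd.exists_seq_strictMono_tendsto δ
  choose s hs using fun n => (hmem n).2
  exact ⟨⟨s, γ, hs, hmono, tendsto_nhdsWithin_iff.2 ⟨hlim, .of_forall fun n => (hmem n).1⟩⟩⟩

/-- Near `δ` only the breadth of `E` matters for whether `φ ∈ V_E`. -/
theorem exists_forall_eventually_nonneg_iff (φ : RatFunc K) (δ : ℝ) :
    ∃ P : Prop, ∀ᶠ δ' in 𝓝[≤] δ, ∀ E : RisingSeq v δ',
      ∀ᶠ n in atTop, (0 ≤ v (ev (E.s n) φ) ↔ P) := by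
  obtain ⟨P, hP⟩ := exists_eventually_valuation_eval_nonneg_iff v φ δ
  exact ⟨P, (eventually_nhdsLE_eventually_nhdsLT hP).mono fun δ' hδ' E =>
    (E.tendsto_γ.eventually hδ').mono fun n hn => hn _ (E.valuation_s n)⟩

variable {δ : ℝ} (E : RisingSeq v δ)

theorem injective_s : Function.Injective E.s := fun m n h => E.strictMono_γ.injective <| by
  have := congrArg v h
  rwa [E.valuation_s, E.valuation_s, WithTop.coe_inj] at this

theorem valuation_sub_succ (n : ℕ) : v (E.s (n + 1) - E.s n) = E.γ n := by
  have hlt : v (E.s n) < v (E.s (n + 1)) := by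
    rw [E.valuation_s, E.valuation_s, WithTop.coe_lt_coe]
    exact E.strictMono_γ n.lt_succ_self
  rw [AddValuation.map_sub_eq_of_lt_right v hlt, E.valuation_s]

theorem isPC : IsPC v E.s := fun n => by
  rw [E.valuation_sub_succ, E.valuation_sub_succ, WithTop.coe_lt_coe]
  exact E.strictMono_γ n.lt_succ_self

theorem eventually_eval₂_ne_zero {p : K[X]} (hp : p ≠ 0) :
    ∀ᶠ n in atTop, p.eval₂ (RingHom.id K) (E.s n) ≠ 0 := by
  rw [← Nat.cofinite_eq_atTop]
  exact E.injective_s.tendsto_cofinite.eventually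
    (finite_setOfPred_isRoot hp).eventually_cofinite_notMem

theorem eventually_eval_mul (φ ψ : RatFunc K) :
    ∀ᶠ n in atTop, ev (E.s n) (φ * ψ) = ev (E.s n) φ * ev (E.s n) ψ := by
  filter_upwards [E.eventually_eval₂_ne_zero φ.denom_ne_zero,
    E.eventually_eval₂_ne_zero ψ.denom_ne_zero] with n hφ hψ
  exact RatFunc.eval_mul (hx := hφ) (hy := hψ)

theorem eventually_eval_add (φ ψ : RatFunc K) :
    ∀ᶠ n in atTop, ev (E.s n) (φ + ψ) = ev (E.s n) φ + ev (E.s n) ψ := by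
  filter_upwards [E.eventually_eval₂_ne_zero φ.denom_ne_zero,
    E.eventually_eval₂_ne_zero ψ.denom_ne_zero] with n hφ hψ
  exact RatFunc.eval_add (hx := hφ) (hy := hψ)

theorem eventually_eval_neg (φ : RatFunc K) :
    ∀ᶠ n in atTop, ev (E.s n) (-φ) = -ev (E.s n) φ := by
  filter_upwards [E.eventually_eval_add φ (-φ)] with n h
  rw [add_neg_cancel, RatFunc.eval_zero] at h
  exact eq_neg_of_add_eq_zero_right h.symm

theorem eventually_eval_inv {φ : RatFunc K} (hφ : φ ≠ 0) :
    ∀ᶠ n in atTop, ev (E.s n) φ⁻¹ = (ev (E.s n) φ)⁻¹ := by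
  filter_upwards [E.eventually_eval_mul φ φ⁻¹] with n h
  rw [mul_inv_cancel₀ hφ, RatFunc.eval_one] at h
  exact eq_inv_of_mul_eq_one_right h.symm

theorem mem_VESet_iff_of_eventually {P : Prop}
    (h : ∀ᶠ n in atTop, (0 ≤ v (ev (E.s n) φ) ↔ P)) : φ ∈ VESet v E.s ↔ P :=
  (eventually_congr h).trans eventually_const

theorem eventually_mem_VESet_iff (φ : RatFunc K) :
    ∀ᶠ δ' in 𝓝[≤] δ, ∀ E' : RisingSeq v δ', (φ ∈ VESet v E'.s ↔ φ ∈ VESet v E.s) := by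
  obtain ⟨P, hP⟩ := exists_forall_eventually_nonneg_iff (v := v) φ δ
  have hE := mem_VESet_iff_of_eventually E (hP.self_of_nhdsWithin self_mem_Iic E)
  exact hP.mono fun δ' h E' => (mem_VESet_iff_of_eventually E' (h E')).trans hE.symm

theorem mem_VESet_or_eventually_neg (φ : RatFunc K) :
    φ ∈ VESet v E.s ∨ ∀ᶠ n in atTop, v (ev (E.s n) φ) < 0 := by
  obtain ⟨P, hP⟩ := exists_forall_eventually_nonneg_iff (v := v) φ δ
  have h := hP.self_of_nhdsWithin self_mem_Iic E
  by_cases hp : P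
  · exact .inl ((mem_VESet_iff_of_eventually E h).2 hp)
  · exact .inr (h.mono fun n hn => not_le.1 fun h' => hp (hn.1 h'))

def valuationSubring : ValuationSubring (RatFunc K) where
  carrier := VESet v E.s
  zero_mem' := .of_forall fun n => by simp
  one_mem' := .of_forall fun n => by simp
  mul_mem' {φ ψ} hφ hψ := by
    filter_upwards [hφ, hψ, E.eventually_eval_mul φ ψ] with n h₁ h₂ h
    rw [h, AddValuation.map_mul]
    exact add_nonneg h₁ h₂
  add_mem' {φ ψ} hφ hψ := by
    filter_upwards [hφ, hψ, E.eventually_eval_add φ ψ] with n h₁ h₂ h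
    rw [h]
    exact AddValuation.map_le_add v h₁ h₂
  neg_mem' {φ} hφ := by
    filter_upwards [hφ, E.eventually_eval_neg φ] with n h₁ h
    rwa [h, AddValuation.map_neg]
  mem_or_inv_mem' φ := by
    rcases eq_or_ne φ 0 with rfl | hφ
    · exact .inl (.of_forall fun n => by simp)
    refine (E.mem_VESet_or_eventually_neg φ).imp id fun hneg => ?_
    filter_upwards [hneg, E.eventually_eval_inv hφ] with n h₁ h
    obtain ⟨r, hr⟩ := WithTop.ne_top_iff_exists.1 h₁.ne_top
    rw [h, AddValuation.map_inv, ← hr, ← WithTop.LinearOrderedAddCommGroup.coe_neg]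
    rw [← hr] at h₁
    exact_mod_cast (neg_nonneg.2 (WithTop.coe_lt_coe.1 h₁).le)

theorem valuationSubring_mem_VV : E.valuationSubring ∈ VV v := ⟨E.s, E.isPC, rfl⟩

theorem valuationSubring_mem_ZarSet : E.valuationSubring ∈ ZarSet v := fun x hx =>
  .of_forall fun n => by rwa [RatFunc.algebraMap_eq_C, RatFunc.eval_C, RingHom.id_apply]

theorem eventually_valuation_eval_C_mul_X_inv {a : K} {r : ℝ} (ha : v a = r) :
    ∀ᶠ n in atTop, v (ev (E.s n) (RatFunc.C a * RatFunc.X⁻¹)) = ((r - E.γ n : ℝ) : WithTop ℝ) := by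
  filter_upwards [E.eventually_eval_mul (RatFunc.C a) RatFunc.X⁻¹,
    E.eventually_eval_inv RatFunc.X_ne_zero] with n hmul hinv
  rw [hmul, hinv, RatFunc.eval_C, RatFunc.eval_X, AddValuation.map_mul, AddValuation.map_inv,
    RingHom.id_apply, ha, E.valuation_s, ← WithTop.LinearOrderedAddCommGroup.coe_neg,
    ← WithTop.coe_add, sub_eq_add_neg]

theorem C_mul_X_inv_mem_VESet {a : K} (ha : v a = δ) :
    RatFunc.C a * RatFunc.X⁻¹ ∈ VESet v E.s := by
  filter_upwards [E.eventually_valuation_eval_C_mul_X_inv ha,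
    E.tendsto_γ.eventually self_mem_nhdsWithin] with n h (hlt : E.γ n < δ)
  rw [h]
  exact_mod_cast (sub_pos.2 hlt).le

theorem C_mul_X_inv_not_mem_VESet {a : K} {r : ℝ} (ha : v a = r) (hr : r < δ) :
    RatFunc.C a * RatFunc.X⁻¹ ∉ VESet v E.s := fun hmem => by
  obtain ⟨n, h, hnonneg, hgt⟩ := (E.eventually_valuation_eval_C_mul_X_inv ha |>.and <| hmem.and <|
    E.tendsto_γ.eventually (eventually_gt_nhds hr |> nhdsWithin_le_nhds)).exists
  rw [h] at hnonneg
  have : 0 ≤ r - E.γ n := by exact_mod_cast hnonneg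
  linarith

end RisingSeq

section NonMetrizable

variable (v : AddValuation K (WithTop ℝ))

theorem tendsto_valuationSubring_consTop (E : ∀ δ, RisingSeq v δ) (δ : ℝ) :
    Tendsto (fun δ => (E δ).valuationSubring) (𝓝[≤] δ)
      (@nhds _ (consTop (RatFunc K)) (E δ).valuationSubring) := by
  rw [consTop, tendsto_nhds_generateFrom_iff]
  rintro U ⟨T, hT⟩ hU
  have key : ∀ᶠ δ' in 𝓝[≤] δ, ((∀ φ ∈ T, φ ∈ (E δ').valuationSubring) ↔
      ∀ φ ∈ T, φ ∈ (E δ).valuationSubring) := by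
    filter_upwards [(eventually_all_finset T).2 fun φ _ => (E δ).eventually_mem_VESet_iff φ]
      with δ' h
    exact forall₂_congr fun φ hφ => h φ hφ (E δ')
  rcases hT with rfl | rfl
  · exact key.mono fun δ' h => h.2 hU
  · exact key.mono fun δ' h hmem => hU (h.1 hmem)

theorem not_isMetrizable_induced (hΓ : ¬ (valueGroup v).Countable)
    (t : TopologicalSpace (ValuationSubring (RatFunc K))) (hcons : consTop (RatFunc K) ≤ t)
    (hB : ∀ φ : RatFunc K, IsOpen[t] {W | φ ∈ W}) (S : Set (ValuationSubring (RatFunc K)))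
    (hS : ∀ δ (E : RisingSeq v δ), E.valuationSubring ∈ S) :
    ¬ IsMetrizable (t.induced ((↑) : S → ValuationSubring (RatFunc K))) := by
  have E : ∀ δ, RisingSeq v δ := fun δ =>
    (RisingSeq.nonempty_of_dense (dense_valueGroup v hΓ) δ).some
  let := t
  rintro ⟨d, hd⟩
  have : PseudoMetrizableSpace S := hd.pseudoMetrizableSpace
  refine hΓ (countable_of_leftContinuous_rightSeparated
    (fun δ => (⟨(E δ).valuationSubring, hS δ (E δ)⟩ : S)) (fun δ => ?_) _ ?_)
  · exact IsInducing.subtypeVal.continuousWithinAt_iff.2 <|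
      (tendsto_valuationSubring_consTop v E δ).mono_right (nhds_mono hcons)
  · rintro δ ⟨a, ha⟩
    refine ⟨Subtype.val ⁻¹' {W | RatFunc.C a * RatFunc.X⁻¹ ∈ W},
      (continuous_subtype_val.isOpen_preimage _ (hB _)).mem_nhds
        ((E δ).C_mul_X_inv_mem_VESet ha), fun δ' _ hlt => (E δ').C_mul_X_inv_not_mem_VESet ha hlt⟩

end NonMetrizable

theorem statement13_general (v : AddValuation K (WithTop ℝ))
    (hΓ : ¬ (valueGroup v).Countable) :
    ¬ IsMetrizable (zarSub (VV v)) ∧ ¬ IsMetrizable (consSub (ZarSet v)) :=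
  ⟨not_isMetrizable_induced v hΓ (zarTop _) (consTop_le_zarTop _)
      (fun φ => isOpen_generateFrom_of_mem ⟨φ, rfl⟩) (VV v) fun _ E => E.valuationSubring_mem_VV,
    not_isMetrizable_induced v hΓ (consTop _) le_rfl isOpen_mem_consTop (ZarSet v)
      fun _ E => E.valuationSubring_mem_ZarSet⟩

/-- If the value group `Γ_v` is uncountable, then `𝒱` (Zariski
topology) is not metrizable and `Zar(K(X)|V)` with the constructible topology is not
metrizable. -/
theorem statement13 (v : AddValuation K (WithTop ℝ)) (hv : IsRankOne v)
    (hΓ : ¬ (valueGroup v).Countable) :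
    ¬ IsMetrizable (zarSub (VV v)) ∧ ¬ IsMetrizable (consSub (ZarSet v)) :=
  statement13_general v hΓ

end PaperPCZar
end
end

section
/- Let V be a valuation domain with uncountable residue field V/M. Then Zar(K(X)|V) endowed with the constructible topology is not metrizable. -/
open Filter Topology TopologicalSpace Set Polynomial

noncomputable section

namespace PaperPCZar

variable {K : Type*} [Field K]

/-!
Lift every residue `r` to some `a_r ∈ V` and let `W_r = {φ ∈ K(X) : φ(a_r) ∈ V}`. Divided by a
coefficient of least (additive) valuation, a nonzero `f ∈ K[X]` has a nonzero reduction over the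
residue field, so `v(f(a_r))` takes one and the same value outside its finitely many roots. Writing
`φ = f / g`, membership `φ ∈ W_r` is therefore the same for all but finitely many `r`, and the
`W_r` converge, along the cofinite filter and in the constructible topology, to the valuation ring
`P` of those `φ` that lie in cofinitely many `W_r`. Moreover `P ≠ W_r`, as `(X - a_r)⁻¹ ∈ P \ W_r`.
For a metric inducing the topology, every ball around `P` thus misses only finitely many `W_r`,
so the uncountably many `W_r`, all at positive distance from `P`, would be covered by countably
many finite sets.
-/

section EvalValuationSubring

variable (V : ValuationSubring K)

lemma mul_algebraMap_denom (φ : RatFunc K) :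
    φ * algebraMap K[X] (RatFunc K) φ.denom = algebraMap K[X] (RatFunc K) φ.num :=
  (div_eq_iff (RatFunc.algebraMap_ne_zero φ.denom_ne_zero)).mp φ.num_div_denom |>.symm

lemma eval_num_ne_zero_of_eval_denom_eq_zero (φ : RatFunc K) {a : K}
    (h : φ.denom.eval a = 0) : φ.num.eval a ≠ 0 := by
  intro h'
  obtain ⟨u, w, huw⟩ := φ.isCoprime_num_denom
  simpa [h, h'] using congrArg (eval a) huw

/-- The valuation ring `{φ ∈ K(X) : φ(a) ∈ V}`. -/
def evalValuationSubring (a : K) : ValuationSubring (RatFunc K) where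
  carrier := {φ | ∃ f g : K[X], g.eval a ≠ 0 ∧
    φ * algebraMap K[X] (RatFunc K) g = algebraMap K[X] (RatFunc K) f ∧ f.eval a / g.eval a ∈ V}
  zero_mem' := ⟨0, 1, by simp, by simp, by simp⟩
  one_mem' := ⟨1, 1, by simp, by simp, by simp⟩
  add_mem' := by
    rintro φ ψ ⟨f₁, g₁, hg₁, h₁, hv₁⟩ ⟨f₂, g₂, hg₂, h₂, hv₂⟩
    refine ⟨f₁ * g₂ + f₂ * g₁, g₁ * g₂, by simp [hg₁, hg₂], ?_, ?_⟩
    · simp only [map_mul, map_add]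
      linear_combination algebraMap K[X] (RatFunc K) g₂ * h₁ +
        algebraMap K[X] (RatFunc K) g₁ * h₂
    · convert add_mem hv₁ hv₂ using 1
      simp only [eval_add, eval_mul]
      field_simp
  mul_mem' := by
    rintro φ ψ ⟨f₁, g₁, hg₁, h₁, hv₁⟩ ⟨f₂, g₂, hg₂, h₂, hv₂⟩
    refine ⟨f₁ * f₂, g₁ * g₂, by simp [hg₁, hg₂], ?_, ?_⟩
    · simp only [map_mul]
      linear_combination ψ * algebraMap K[X] (RatFunc K) g₂ * h₁ +
        algebraMap K[X] (RatFunc K) f₁ * h₂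
    · convert mul_mem hv₁ hv₂ using 1
      simp only [eval_mul, div_mul_div_comm]
  neg_mem' := by
    rintro φ ⟨f, g, hg, h, hv⟩
    refine ⟨-f, g, hg, ?_, ?_⟩
    · simp only [map_neg]
      linear_combination -h
    · simpa [neg_div] using neg_mem hv
  mem_or_inv_mem' φ := by
    have hinv (hnum : φ.num.eval a ≠ 0) :
        φ⁻¹ * algebraMap K[X] (RatFunc K) φ.num = algebraMap K[X] (RatFunc K) φ.denom := by
      have hφ : φ ≠ 0 := fun h => hnum (by simp [h])
      rw [← mul_algebraMap_denom, ← mul_assoc, inv_mul_cancel₀ hφ, one_mul]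
    by_cases hnum : φ.num.eval a = 0
    · exact Or.inl ⟨_, _, fun h => eval_num_ne_zero_of_eval_denom_eq_zero φ h hnum,
        mul_algebraMap_denom φ, by simp [hnum]⟩
    by_cases hdenom : φ.denom.eval a = 0
    · exact Or.inr ⟨_, _, hnum, hinv hnum, by simp [hdenom]⟩
    rcases V.mem_or_inv_mem (φ.num.eval a / φ.denom.eval a) with h | h
    · exact Or.inl ⟨_, _, hdenom, mul_algebraMap_denom φ, h⟩
    · exact Or.inr ⟨_, _, hnum, hinv hnum, by rwa [inv_div] at h⟩

variable {V}

lemma mem_evalValuationSubring_iff {a : K} {φ : RatFunc K} :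
    φ ∈ evalValuationSubring V a ↔
      φ.denom.eval a ≠ 0 ∧ V.valuation (φ.num.eval a) ≤ V.valuation (φ.denom.eval a) := by
  constructor
  · rintro ⟨f, g, hg, h, hv⟩
    have hcross : φ.num.eval a * g.eval a = f.eval a * φ.denom.eval a := by
      have : φ.num * g = f * φ.denom := RatFunc.algebraMap_injective K <| by
        simp only [map_mul]
        rw [← mul_algebraMap_denom, ← h]
        ring
      simpa using congrArg (eval a) this
    have hdenom : φ.denom.eval a ≠ 0 := fun h0 =>
      eval_num_ne_zero_of_eval_denom_eq_zero φ h0 <| by simpa [h0, hg] using hcross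
    refine ⟨hdenom, ?_⟩
    have hg' : 0 < V.valuation (g.eval a) := V.valuation.pos_iff.mpr hg
    rw [← V.valuation_le_one_iff, map_div₀, div_le_one₀ hg'] at hv
    calc V.valuation (φ.num.eval a)
        = V.valuation (f.eval a) * V.valuation (φ.denom.eval a) / V.valuation (g.eval a) := by
          rw [← map_mul, ← hcross, map_mul, mul_div_cancel_right₀ _ hg'.ne']
      _ ≤ V.valuation (φ.denom.eval a) := by
          rw [div_le_iff₀ hg', mul_comm]
          exact mul_le_mul_right hv _
  · rintro ⟨hdenom, hle⟩
    refine ⟨_, _, hdenom, mul_algebraMap_denom φ, ?_⟩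
    rwa [← V.valuation_le_one_iff, map_div₀, div_le_one₀ (V.valuation.pos_iff.mpr hdenom)]

lemma algebraMap_mem_evalValuationSubring {x : K} (hx : x ∈ V) (a : K) :
    algebraMap K (RatFunc K) x ∈ evalValuationSubring V a :=
  ⟨C x, 1, by simp, by simp [RatFunc.algebraMap_C], by simpa using hx⟩

lemma inv_X_sub_C_notMem_evalValuationSubring (a : K) :
    (algebraMap K[X] (RatFunc K) (X - C a))⁻¹ ∉ evalValuationSubring V a := by
  rintro ⟨f, g, hg, h, -⟩
  have : g = (X - C a) * f := RatFunc.algebraMap_injective K <| by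
    rw [map_mul, ← h, ← mul_assoc,
      mul_inv_cancel₀ (RatFunc.algebraMap_ne_zero (X_sub_C_ne_zero a)), one_mul]
  exact hg (by simp [this])

lemma inv_X_sub_C_mem_evalValuationSubring {x y : V} (h : IsUnit (y - x)) :
    (algebraMap K[X] (RatFunc K) (X - C (x : K)))⁻¹ ∈ evalValuationSubring V y := by
  have hv : V.valuation ((y : K) - x) = 1 := by exact_mod_cast (V.valuation_eq_one_iff _).mp h
  refine ⟨1, X - C (x : K), ?_, ?_, ?_⟩
  · simpa using (V.valuation.ne_zero_iff).mp (by simp [hv])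
  · rw [map_one, inv_mul_cancel₀ (RatFunc.algebraMap_ne_zero (X_sub_C_ne_zero _))]
  · rw [← V.valuation_le_one_iff]
    simp [hv]

end EvalValuationSubring

lemma eventually_inv_X_sub_C_mem_evalValuationSubring {V : ValuationSubring K}
    {a : IsLocalRing.ResidueField V → V} (ha : ∀ r, IsLocalRing.residue V (a r) = r)
    (r : IsLocalRing.ResidueField V) :
    ∀ᶠ s in cofinite,
      (algebraMap K[X] (RatFunc K) (X - C (a r : K)))⁻¹ ∈ evalValuationSubring V (a s) := by
  refine (eventually_cofinite_ne r).mono fun s hs => inv_X_sub_C_mem_evalValuationSubring ?_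
  rw [← IsLocalRing.residue_ne_zero_iff_isUnit, map_sub, ha, ha]
  exact sub_ne_zero.mpr hs

section ResidueReduction

variable {V : ValuationSubring K}

lemma exists_integral_rescaling {f : K[X]} (hf : f ≠ 0) :
    ∃ c : K, ∃ H : V[X], H.map V.subtype = C c⁻¹ * f ∧ H.map (IsLocalRing.residue V) ≠ 0 := by
  obtain ⟨i, hi, hmax⟩ :=
    f.support.exists_max_image (V.valuation ∘ f.coeff) (support_nonempty.mpr hf)
  have hc : f.coeff i ≠ 0 := mem_support_iff.mp hi
  have hcoeff (n : ℕ) : (C (f.coeff i)⁻¹ * f).coeff n ∈ V := by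
    rw [coeff_C_mul, ← V.valuation_le_one_iff, map_mul, map_inv₀,
      inv_mul_le_one₀ (V.valuation.pos_iff.mpr hc)]
    by_cases hn : n ∈ f.support
    · exact hmax n hn
    · simp [notMem_support_iff.mp hn]
  obtain ⟨H, hH⟩ := (mem_lifts _).mp <|
    (lifts_iff_coeff_lifts (f := V.subtype) _).mpr fun n => ⟨⟨_, hcoeff n⟩, rfl⟩
  refine ⟨f.coeff i, H, hH, fun h0 => ?_⟩
  have hHi : H.coeff i = 1 := Subtype.ext <| by
    simpa [hc] using congrArg (coeff · i) hH
  simpa [hHi] using congrArg (coeff · i) h0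

theorem exists_eventually_valuation_eval_eq (f : K[X]) :
    ∃ c : K, ∀ᶠ r in cofinite, ∀ x : V, IsLocalRing.residue V x = r →
      V.valuation (f.eval (x : K)) = V.valuation c := by
  rcases eq_or_ne f 0 with rfl | hf
  · exact ⟨0, Eventually.of_forall fun _ _ _ => by simp⟩
  obtain ⟨c, H, hH, hres⟩ := exists_integral_rescaling (V := V) hf
  refine ⟨c, (finite_setOfPred_isRoot hres).eventually_cofinite_notMem.mono ?_⟩
  rintro r hr x rfl
  have hunit : IsUnit (H.eval x) := by
    rw [← IsLocalRing.residue_ne_zero_iff_isUnit, ← eval₂_at_apply, ← eval_map]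
    exact hr
  have hval : V.valuation (c⁻¹ * f.eval (x : K)) = 1 := by
    rw [← eval_C_mul, ← hH, eval_map, ← V.subtype_apply, eval₂_at_apply]
    exact (V.valuation_eq_one_iff _).mp hunit
  rw [map_mul, map_inv₀] at hval
  have hc : V.valuation c ≠ 0 := fun h => by simp [h] at hval
  field_simp at hval
  exact hval

end ResidueReduction

theorem eventuallyConst_mem_evalValuationSubring {V : ValuationSubring K}
    {a : IsLocalRing.ResidueField V → V} (ha : ∀ r, IsLocalRing.residue V (a r) = r)
    (φ : RatFunc K) :
    EventuallyConst (fun r => φ ∈ evalValuationSubring V (a r)) cofinite := by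
  obtain ⟨c₁, hnum⟩ := exists_eventually_valuation_eval_eq (V := V) φ.num
  obtain ⟨c₂, hdenom⟩ := exists_eventually_valuation_eval_eq (V := V) φ.denom
  refine eventuallyConst_iff_exists_eventuallyEq.mpr
    ⟨c₂ ≠ 0 ∧ V.valuation c₁ ≤ V.valuation c₂, (hnum.and hdenom).mono fun r ⟨h₁, h₂⟩ => ?_⟩
  simp only [mem_evalValuationSubring_iff, ← V.valuation.ne_zero_iff,
    h₁ _ (ha r), h₂ _ (ha r)]

section EventualValuationSubring

variable {ι L : Type*} [Field L] (W : ι → ValuationSubring L) (l : Filter ι)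

def eventualValuationSubring (hW : ∀ φ, EventuallyConst (fun i => φ ∈ W i) l) :
    ValuationSubring L where
  carrier := {φ | ∀ᶠ i in l, φ ∈ W i}
  zero_mem' := Eventually.of_forall fun _ => zero_mem _
  one_mem' := Eventually.of_forall fun _ => one_mem _
  add_mem' h₁ h₂ := (h₁.and h₂).mono fun _ h => add_mem h.1 h.2
  mul_mem' h₁ h₂ := (h₁.and h₂).mono fun _ h => mul_mem h.1 h.2
  neg_mem' h := h.mono fun _ h => neg_mem h
  mem_or_inv_mem' φ := (eventuallyConst_pred.mp (hW φ)).imp_right fun h =>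
    h.mono fun i hi => ((W i).mem_or_inv_mem φ).resolve_left hi

variable {W l}

@[simp]
lemma mem_eventualValuationSubring {hW : ∀ φ, EventuallyConst (fun i => φ ∈ W i) l} {φ : L} :
    φ ∈ eventualValuationSubring W l hW ↔ ∀ᶠ i in l, φ ∈ W i :=
  Iff.rfl

lemma eventually_mem_iff_mem_eventualValuationSubring [l.NeBot]
    (hW : ∀ φ, EventuallyConst (fun i => φ ∈ W i) l) (φ : L) :
    ∀ᶠ i in l, φ ∈ W i ↔ φ ∈ eventualValuationSubring W l hW := by
  rcases eventuallyConst_pred.mp (hW φ) with h | h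
  · exact h.mono fun i hi => iff_of_true hi h
  · refine h.mono fun i hi => iff_of_false hi fun h' => ?_
    obtain ⟨_, hnot, hmem⟩ := (h.and (mem_eventualValuationSubring.mp h')).exists
    exact hnot hmem

end EventualValuationSubring

lemma tendsto_nhds_consSub {ι L : Type*} [Field L] {S : Set (ValuationSubring L)}
    {W : ι → S} {l : Filter ι} {P : S}
    (h : ∀ φ, ∀ᶠ i in l, φ ∈ (W i : ValuationSubring L) ↔ φ ∈ (P : ValuationSubring L)) :
    Tendsto W l (@nhds S (consSub S) P) := by
  rw [consSub, consTop, @nhds_induced _ _ (generateFrom _), tendsto_comap_iff,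
    TopologicalSpace.tendsto_nhds_generateFrom_iff]
  rintro s ⟨T, rfl | rfl⟩ hP
  all_goals have hT := (eventually_all_finset T).mpr fun φ _ => h φ
  · exact hT.mono fun i hi φ hφ => (hi φ hφ).mpr (hP φ hφ)
  · exact hT.mono fun i hi hall => hP fun φ hφ => (hi φ hφ).mp (hall φ hφ)

section MetrizedBy

variable {X : Type*} {t : TopologicalSpace X} {d : X → X → ℝ}

lemma MetrizedBy.nonneg (hd : MetrizedBy t d) (x y : X) : 0 ≤ d x y := by
  obtain ⟨hsymm, hzero, htri, -⟩ := hd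
  have := htri x y x
  rw [(hzero x x).mpr rfl, hsymm y x] at this
  linarith

lemma MetrizedBy.ball_mem_nhds (hd : MetrizedBy t d) (x : X) {ε : ℝ} (hε : 0 < ε) :
    {y | d x y < ε} ∈ @nhds X t x := by
  refine @IsOpen.mem_nhds X t x _ ?_ (by simpa [(hd.2.1 x x).mpr rfl] using hε)
  rw [hd.2.2.2]
  exact TopologicalSpace.isOpen_generateFrom_of_mem ⟨x, ε, hε, rfl⟩

lemma MetrizedBy.countable_of_tendsto_cofinite (hd : MetrizedBy t d) {ι : Type*} {f : ι → X}
    {x : X} (hf : Tendsto f cofinite (@nhds X t x)) (hne : ∀ i, f i ≠ x) : Countable ι := by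
  have hfin (n : ℕ) : {i | ¬ d x (f i) < 1 / ((n : ℝ) + 1)}.Finite :=
    eventually_cofinite.mp (hf (hd.ball_mem_nhds x (by positivity)))
  refine Set.countable_univ_iff.mp <| (Set.countable_iUnion fun n => (hfin n).countable).mono ?_
  intro i _
  have hpos : 0 < d x (f i) :=
    (hd.nonneg x (f i)).lt_of_ne fun h => hne i ((hd.2.1 x (f i)).mp h.symm).symm
  obtain ⟨n, hn⟩ := exists_nat_one_div_lt hpos
  exact Set.mem_iUnion.mpr ⟨n, not_lt.mpr hn.le⟩

end MetrizedBy

/-- If `V` is a valuation domain with uncountable residue field, then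
`Zar(K(X)|V)` with the constructible topology is not metrizable. -/
theorem statement15 (V : ValuationSubring K)
    (hres : ¬ Countable (IsLocalRing.ResidueField ↥V)) :
    ¬ IsMetrizable (consSub {W : ValuationSubring (RatFunc K) |
      ∀ x : K, x ∈ V → algebraMap K (RatFunc K) x ∈ W}) := by
  set S := {W : ValuationSubring (RatFunc K) | ∀ x : K, x ∈ V → algebraMap K (RatFunc K) x ∈ W}
  rintro ⟨d, hd⟩
  have : Infinite (IsLocalRing.ResidueField V) :=
    not_finite_iff_infinite.mp fun _ => hres inferInstance
  let a := Function.surjInv (IsLocalRing.residue_surjective (R := V))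
  have ha : ∀ r, IsLocalRing.residue V (a r) = r := Function.surjInv_eq _
  have hconst := eventuallyConst_mem_evalValuationSubring ha
  let W (r : IsLocalRing.ResidueField V) : S :=
    ⟨evalValuationSubring V (a r), fun _ hx => algebraMap_mem_evalValuationSubring hx _⟩
  let P : S := ⟨eventualValuationSubring _ cofinite hconst,
    fun _ hx => mem_eventualValuationSubring.mpr <|
      Eventually.of_forall fun _ => algebraMap_mem_evalValuationSubring hx _⟩
  have hne (r : IsLocalRing.ResidueField V) : W r ≠ P := fun hr => by
    have hpole : (algebraMap K[X] (RatFunc K) (X - C (a r : K)))⁻¹ ∈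
        eventualValuationSubring _ cofinite hconst :=
      mem_eventualValuationSubring.mpr (eventually_inv_X_sub_C_mem_evalValuationSubring ha r)
    have heq : evalValuationSubring V (a r) = eventualValuationSubring _ cofinite hconst :=
      congrArg Subtype.val hr
    exact inv_X_sub_C_notMem_evalValuationSubring (a r : K) (heq ▸ hpole)
  exact hres <| hd.countable_of_tendsto_cofinite (f := W) (x := P)
    (tendsto_nhds_consSub (eventually_mem_iff_mem_eventualValuationSubring hconst)) hne

end PaperPCZar
end
end

section
/- For every δ ∈ Γ_v, the set 𝒱_stat(•,δ) of valuation domains V_E arising from pseudo-stationary sequences of breadth δ is discrete with respect to both the Zariski and the constructible topology; and for every β ∈ K, the set 𝒱_stat(β,•) of valuation domains V_E arising from pseudo-stationary sequences having β as a pseudo-limit is discrete with respect to both the Zariski and the constructible topology. -/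
/-!
Let `E` be pseudo-stationary of breadth `δ = v c < ∞` inside the closed ball `B(a, δ)`. The
substitution `x ↦ (x - a) / c` turns `E` into a sequence in `V` with pairwise unit differences,
and an integral polynomial `f` has positive value at no more than `deg f` such points (Lagrange
interpolation). Hence `v (f (s_n))` is eventually the Gauss valuation of `f (c X + a)`, so `V_E`
depends only on the ball. In `V_E` the function `(X - a) / c` is a unit, whereas in `V_F` it is a
unit only if `F` eventually lies on the sphere of radius `δ` about `a`, which pins down the ball of
`F` within either family. So every point of `𝒱_stat(•,δ)` and of `𝒱_stat(β,•)` is cut out by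
`B(φ) ∩ B(φ⁻¹)`, which is open in both topologies.
-/
open Filter Topology TopologicalSpace Set Polynomial

noncomputable section

namespace PaperPCZar

variable {K : Type*} [Field K]

def IsStationaryOfBreadth (v : AddValuation K (WithTop ℝ)) (s : ℕ → K) (δ : WithTop ℝ) : Prop :=
  ∀ n m : ℕ, n ≠ m → v (s n - s m) = δ

section Valuation

variable (v : AddValuation K (WithTop ℝ))

lemma val_div_nonneg_iff {c : K} (hc : c ≠ 0) (y : K) : 0 ≤ v (y / c) ↔ v c ≤ v y := by
  have hy : v y = v (y / c) + v c := by rw [← v.map_mul, div_mul_cancel₀ _ hc]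
  rw [hy, ← WithTop.add_le_add_iff_right ((v.ne_top_iff).2 hc), zero_add]

lemma val_div_eq_zero_iff {c : K} (hc : c ≠ 0) (y : K) : v (y / c) = 0 ↔ v y = v c := by
  have hy : v y = v (y / c) + v c := by rw [← v.map_mul, div_mul_cancel₀ _ hc]
  rw [hy, ← WithTop.add_right_inj ((v.ne_top_iff).2 hc), zero_add]

lemma exists_val_neg (hv : IsRankOne v) : ∃ A : K, v A < 0 := by
  obtain ⟨z, hz0, hztop⟩ := hv
  rcases (lt_or_gt_of_ne hz0) with hneg | hpos
  · exact ⟨z, hneg⟩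
  · refine ⟨z⁻¹, ?_⟩
    obtain ⟨r, hr⟩ := WithTop.ne_top_iff_exists.1 hztop
    rw [← hr] at hpos
    rw [v.map_inv, ← hr, ← WithTop.LinearOrderedAddCommGroup.coe_neg]
    exact_mod_cast neg_neg_of_pos (by exact_mod_cast hpos)

end Valuation

namespace IsStationaryOfBreadth

variable {v : AddValuation K (WithTop ℝ)} {x : ℕ → K} {δ : WithTop ℝ}

lemma injective (hx : IsStationaryOfBreadth v x δ) (hδ : δ ≠ ⊤) : Function.Injective x := by
  intro n m hnm
  by_contra hne
  rw [← hx n m hne, hnm, sub_self, v.map_zero] at hδ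
  exact hδ rfl

lemma eventually_notMem (hx : IsStationaryOfBreadth v x δ) (hδ : δ ≠ ⊤) {S : Set K}
    (hS : S.Finite) : ∀ᶠ n in atTop, x n ∉ S := by
  rw [← Nat.cofinite_eq_atTop]
  exact (hx.injective hδ).tendsto_cofinite hS.compl_mem_cofinite

lemma eventually_ne (hx : IsStationaryOfBreadth v x δ) (hδ : δ ≠ ⊤) (a : K) :
    ∀ᶠ n in atTop, x n ≠ a :=
  hx.eventually_notMem hδ (Set.finite_singleton a)

lemma le_val_sub (hx : IsStationaryOfBreadth v x δ) {a : K} {n₀ : ℕ}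
    (h : δ ≤ v (a - x n₀)) (n : ℕ) : δ ≤ v (a - x n) := by
  rw [← sub_add_sub_cancel a (x n₀) (x n)]
  refine v.map_le_add h ?_
  rcases eq_or_ne n₀ n with rfl | hne
  · simp
  · exact (hx n₀ n hne).ge

lemma eventually_val_sub_eq (hx : IsStationaryOfBreadth v x δ) {a : K}
    (hxa : ∀ n, δ ≤ v (a - x n)) : ∀ᶠ n in atTop, v (a - x n) = δ := by
  -- two points strictly inside the ball would be at distance `> δ`
  have hsub : {n | δ < v (a - x n)}.Subsingleton := by
    intro n hn m hm
    by_contra hnm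
    have hmin : min (v (a - x m)) (v (a - x n)) ≤ v (x n - x m) := by
      rw [← sub_sub_sub_cancel_left (x m) (x n) a]
      exact v.map_sub _ _
    exact (hx n m hnm).not_gt (lt_min hm hn |>.trans_le hmin)
  rw [← Nat.cofinite_eq_atTop]
  filter_upwards [hsub.finite.compl_mem_cofinite] with n hn
  exact le_antisymm (not_lt.1 hn) (hxa n)

end IsStationaryOfBreadth

section Gauss

variable (v : AddValuation K (WithTop ℝ))

def integralPolynomials : Subring K[X] where
  carrier := {p | ∀ k, 0 ≤ v (p.coeff k)}
  mul_mem' {p q} hp hq k := by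
    rw [coeff_mul]
    exact v.map_le_sum fun i _ => by rw [v.map_mul]; exact add_nonneg (hp _) (hq _)
  one_mem' k := by rw [coeff_one]; split_ifs <;> simp
  add_mem' {p q} hp hq k := by rw [coeff_add]; exact v.map_le_add (hp k) (hq k)
  zero_mem' k := by simp
  neg_mem' {p} hp k := by rw [coeff_neg, v.map_neg]; exact hp k

variable {v}

lemma C_mem_integralPolynomials {a : K} (ha : 0 ≤ v a) : C a ∈ integralPolynomials v := by
  intro k
  rw [coeff_C]
  split_ifs <;> simp [ha]

lemma X_mem_integralPolynomials : (X : K[X]) ∈ integralPolynomials v := by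
  intro k
  rw [coeff_X]
  split_ifs <;> simp

lemma basisDivisor_mem_integralPolynomials {x y : K} (hxy : v (x - y) = 0) (hy : 0 ≤ v y) :
    Lagrange.basisDivisor x y ∈ integralPolynomials v :=
  mul_mem (C_mem_integralPolynomials (by rw [v.map_inv, hxy, neg_zero]))
    (sub_mem X_mem_integralPolynomials (C_mem_integralPolynomials hy))

lemma basis_mem_integralPolynomials {ι : Type*} [DecidableEq ι] {t : Finset ι} {r : ι → K}
    (hr : ∀ i ∈ t, 0 ≤ v (r i)) (hunit : ∀ i ∈ t, ∀ j ∈ t, i ≠ j → v (r i - r j) = 0)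
    {i : ι} (hi : i ∈ t) : Lagrange.basis t r i ∈ integralPolynomials v :=
  prod_mem fun j hj => basisDivisor_mem_integralPolynomials
    (hunit i hi j (Finset.mem_of_mem_erase hj) (Finset.ne_of_mem_erase hj).symm)
    (hr j (Finset.mem_of_mem_erase hj))

/-- By Lagrange interpolation the coefficients of `p` are `V`-linear combinations of the values
`p (r i)`. -/
lemma lt_val_coeff_of_lt_val_eval {ι : Type*} [DecidableEq ι] {t : Finset ι} {r : ι → K}
    {p : K[X]} {γ : WithTop ℝ} (hcard : p.natDegree < t.card)
    (hr : ∀ i ∈ t, 0 ≤ v (r i)) (hunit : ∀ i ∈ t, ∀ j ∈ t, i ≠ j → v (r i - r j) = 0)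
    (hlt : ∀ i ∈ t, γ < v (p.eval (r i))) (k : ℕ) : γ < v (p.coeff k) := by
  obtain ⟨i₀, hi₀⟩ := Finset.card_pos.1 (Nat.zero_lt_of_lt hcard)
  have hinj : Set.InjOn r t := fun i hi j hj hij => by
    by_contra hne
    simpa [hij] using hunit i hi j hj hne
  have hp : p = Lagrange.interpolate t r (fun i => p.eval (r i)) :=
    Lagrange.eq_interpolate hinj (degree_le_natDegree.trans_lt (by exact_mod_cast hcard))
  rw [hp, Lagrange.interpolate_apply, finsetSum_coeff]
  refine v.map_lt_sum (hlt i₀ hi₀).ne_top fun i hi => ?_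
  rw [coeff_C_mul, v.map_mul]
  exact (hlt i hi).trans_le (le_add_of_nonneg_right (basis_mem_integralPolynomials hr hunit hi k))

variable (v)

def gaussVal (p : K[X]) : WithTop ℝ :=
  (Finset.range (p.natDegree + 1)).inf fun k => v (p.coeff k)

lemma gaussVal_le_val_coeff (p : K[X]) (k : ℕ) : gaussVal v p ≤ v (p.coeff k) := by
  by_cases hk : k < p.natDegree + 1
  · exact Finset.inf_le (Finset.mem_range.2 hk)
  · rw [coeff_eq_zero_of_natDegree_lt (by omega), v.map_zero]
    exact le_top

lemma exists_val_coeff_eq_gaussVal (p : K[X]) : ∃ k, v (p.coeff k) = gaussVal v p := by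
  obtain ⟨k, -, hk⟩ := Finset.exists_mem_eq_inf _ Finset.nonempty_range_add_one
    fun k => v (p.coeff k)
  exact ⟨k, hk.symm⟩

lemma gaussVal_le_val_eval (p : K[X]) {x : K} (hx : 0 ≤ v x) : gaussVal v p ≤ v (p.eval x) := by
  rw [eval_eq_sum_range]
  refine v.map_le_sum fun i _ => ?_
  rw [v.map_mul, v.map_pow]
  exact le_add_of_le_of_nonneg (gaussVal_le_val_coeff v p i) (nsmul_nonneg hx i)

lemma eventually_val_eval_eq_gaussVal (p : K[X]) {r : ℕ → K} (hr : ∀ n, 0 ≤ v (r n))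
    (hunit : IsStationaryOfBreadth v r 0) : ∀ᶠ n in atTop, v (p.eval (r n)) = gaussVal v p := by
  have hfin : {n | gaussVal v p < v (p.eval (r n))}.Finite := by
    by_contra hinf
    obtain ⟨t, hsub, hcard⟩ := Set.Infinite.exists_subset_card_eq hinf (p.natDegree + 1)
    obtain ⟨k, hk⟩ := exists_val_coeff_eq_gaussVal v p
    exact (lt_val_coeff_of_lt_val_eval (by omega) (fun i _ => hr i)
      (fun i _ j _ => hunit i j) (fun i hi => hsub hi) k).ne' hk
  rw [← Nat.cofinite_eq_atTop]
  filter_upwards [hfin.compl_mem_cofinite] with n hn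
  exact le_antisymm (not_lt.1 hn) (gaussVal_le_val_eval v p (hr n))

end Gauss

lemma _root_.RatFunc.eval_id_eq_div (φ : RatFunc K) (x : K) :
    RatFunc.eval (RingHom.id K) x φ = φ.num.eval x / φ.denom.eval x := by
  simp only [RatFunc.eval, eval₂_id]

section VESet

variable {v : AddValuation K (WithTop ℝ)}

/-- `x ↦ (x - a) / c` maps the ball onto `V` and the sequence onto one with pairwise unit
differences. -/
lemma eventually_val_eval_eq_gaussVal_comp (p : K[X]) {x : ℕ → K} {a c : K} (hc : c ≠ 0)
    (hx : IsStationaryOfBreadth v x (v c)) (hxa : ∀ n, v c ≤ v (a - x n)) :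
    ∀ᶠ n in atTop, v (p.eval (x n)) = gaussVal v (p.comp (C c * X + C a)) := by
  set r : ℕ → K := fun n => (x n - a) / c
  have hr : ∀ n, 0 ≤ v (r n) := fun n => by
    rw [val_div_nonneg_iff v hc, v.map_sub_swap]
    exact hxa n
  have hunit : IsStationaryOfBreadth v r 0 := fun n m hnm => by
    rw [show r n - r m = (x n - x m) / c by simp only [r]; ring, val_div_eq_zero_iff v hc]
    exact hx n m hnm
  filter_upwards [eventually_val_eval_eq_gaussVal v _ hr hunit] with n hn
  rw [← hn, eval_comp]
  simp only [r, eval_add, eval_mul, eval_C, eval_X, mul_div_cancel₀ _ hc, sub_add_cancel]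

lemma mem_VESet_iff {x : ℕ → K} {a c : K} (hc : c ≠ 0)
    (hx : IsStationaryOfBreadth v x (v c)) (hxa : ∀ n, v c ≤ v (a - x n)) (φ : RatFunc K) :
    φ ∈ VESet v x ↔ gaussVal v (φ.denom.comp (C c * X + C a)) ≤
      gaussVal v (φ.num.comp (C c * X + C a)) := by
  have hdenom : ∀ᶠ n in atTop, x n ∉ {y | φ.denom.IsRoot y} :=
    hx.eventually_notMem (v.ne_top_iff.2 hc) (finite_setOfPred_isRoot φ.denom_ne_zero)
  change (∀ᶠ n in atTop, _) ↔ _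
  refine (eventually_congr ?_).trans eventually_const
  filter_upwards [hdenom, eventually_val_eval_eq_gaussVal_comp φ.num hc hx hxa,
    eventually_val_eval_eq_gaussVal_comp φ.denom hc hx hxa] with n hn hnum hden
  rw [RatFunc.eval_id_eq_div, val_div_nonneg_iff v hn, hnum, hden]

lemma VESet_eq_of_le_val_sub {s t : ℕ → K} {a : K} {δ : WithTop ℝ} (hδ : δ ≠ ⊤)
    (hs : IsStationaryOfBreadth v s δ) (ht : IsStationaryOfBreadth v t δ)
    (hsa : ∀ n, δ ≤ v (a - s n)) (hta : ∀ n, δ ≤ v (a - t n)) : VESet v s = VESet v t := by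
  have hc : v (s 0 - s 1) = δ := hs 0 1 zero_ne_one
  have hc0 : s 0 - s 1 ≠ 0 := v.ne_top_iff.1 (hc ▸ hδ)
  rw [← hc] at hs ht hsa hta
  ext φ
  rw [mem_VESet_iff hc0 hs hsa, mem_VESet_iff hc0 ht hta]

end VESet

lemma _root_.RatFunc.eval_id_algebraMap_div {p q : K[X]} {x : K} (hq : q.eval x ≠ 0) :
    RatFunc.eval (RingHom.id K) x (algebraMap K[X] (RatFunc K) p / algebraMap K[X] _ q) =
      p.eval x / q.eval x := by
  set φ := algebraMap K[X] (RatFunc K) p / algebraMap K[X] _ q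
  have hq0 : q ≠ 0 := by rintro rfl; simp at hq
  have hcross : φ.num * q = p * φ.denom := (RatFunc.num_mul_eq_mul_denom_iff hq0).2 rfl
  have hden : φ.denom.eval x ≠ 0 := fun h0 =>
    hq (eval_eq_zero_of_dvd_of_eval_eq_zero (RatFunc.denom_div_dvd p q) h0)
  rw [RatFunc.eval_id_eq_div, div_eq_div_iff hden hq, ← eval_mul, ← eval_mul, hcross]

lemma _root_.RatFunc.eval_id_inv_algebraMap_of_isRoot {p : K[X]} {x : K} (hp : p ≠ 0)
    (hx : p.IsRoot x) : RatFunc.eval (RingHom.id K) x (algebraMap K[X] (RatFunc K) p)⁻¹ = 0 := by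
  refine RatFunc.eval_eq_zero_of_eval₂_denom_eq_zero ?_
  have hdvd := (RatFunc.associated_denom_inv (RatFunc.algebraMap_ne_zero hp)).symm.dvd
  rw [RatFunc.num_algebraMap] at hdvd
  exact eval₂_eq_zero_of_dvd_of_eval₂_eq_zero _ _ hdvd (by simpa using hx)

section Stationary

variable {v : AddValuation K (WithTop ℝ)}

/-- Because of the junk value at the pole, `V_E` of a constant sequence `a` contains `1 / (X - a)`
and `A (X - a)`, hence every constant `A`; so it is not a valuation ring when `v` is
nontrivial. -/
lemma VESet_const_ne_coe (hv : IsRankOne v) (W : ValuationSubring (RatFunc K)) (a : K) :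
    (W : Set (RatFunc K)) ≠ VESet v (fun _ => a) := by
  intro hW
  obtain ⟨A, hA⟩ := exists_val_neg v hv
  have hmem : ∀ φ : RatFunc K, 0 ≤ v (RatFunc.eval (RingHom.id K) a φ) → φ ∈ W := fun φ hφ => by
    rw [← SetLike.mem_coe, hW]
    exact Eventually.of_forall fun _ => hφ
  have hpole := RatFunc.eval_id_inv_algebraMap_of_isRoot (X_sub_C_ne_zero a) (root_X_sub_C.2 rfl)
  have hAX : algebraMap K[X] (RatFunc K) (C A * (X - C a)) ∈ W :=
    hmem _ (by rw [RatFunc.eval_algebraMap]; simp)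
  have hinv : (algebraMap K[X] (RatFunc K) (X - C a))⁻¹ ∈ W :=
    hmem _ (by rw [hpole, v.map_zero]; exact le_top)
  have hCA : algebraMap K[X] (RatFunc K) (C A) ∈ W := by
    convert mul_mem hAX hinv using 1
    rw [map_mul, mul_assoc, mul_inv_cancel₀ (RatFunc.algebraMap_ne_zero (X_sub_C_ne_zero a)),
      mul_one]
  rw [← SetLike.mem_coe, hW] at hCA
  obtain ⟨n, hn⟩ := hCA.exists
  simp only [RatFunc.algebraMap_C, RatFunc.eval_C, RingHom.id_apply] at hn
  exact hA.not_ge hn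

lemma IsStationaryOfBreadth.ne_top (hv : IsRankOne v) {s : ℕ → K} {δ : WithTop ℝ}
    (hs : IsStationaryOfBreadth v s δ) {W : ValuationSubring (RatFunc K)}
    (hW : (W : Set (RatFunc K)) = VESet v s) : δ ≠ ⊤ := by
  rintro rfl
  have hconst : s = fun _ => s 0 := funext fun n => by
    rcases eq_or_ne n 0 with rfl | hn
    · rfl
    · exact sub_eq_zero.1 (v.top_iff.1 (hs n 0 hn))
  exact VESet_const_ne_coe hv W (s 0) (hconst ▸ hW)

end Stationary

section BallCoord

variable {v : AddValuation K (WithTop ℝ)}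

/-- The coordinate on the closed ball `{x : v c ≤ v (a - x)}`. -/
def ballCoord (a c : K) : RatFunc K :=
  algebraMap K[X] (RatFunc K) (X - C a) / algebraMap K[X] (RatFunc K) (C c)

lemma ballCoord_isUnit_mem_VESet_iff {x : ℕ → K} {a c : K} (hc : c ≠ 0)
    (hxa : ∀ᶠ n in atTop, x n ≠ a) :
    (ballCoord a c ∈ VESet v x ∧ (ballCoord a c)⁻¹ ∈ VESet v x) ↔
      ∀ᶠ n in atTop, v (a - x n) = v c := by
  change (∀ᶠ n in atTop, _) ∧ (∀ᶠ n in atTop, _) ↔ _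
  rw [← eventually_and]
  refine eventually_congr ?_
  filter_upwards [hxa] with n hn
  have hn' : x n - a ≠ 0 := sub_ne_zero.2 hn
  rw [ballCoord, inv_div, RatFunc.eval_id_algebraMap_div (by simpa using hc),
    RatFunc.eval_id_algebraMap_div (by simpa using hn')]
  simp only [eval_sub, eval_X, eval_C]
  rw [val_div_nonneg_iff v hc, val_div_nonneg_iff v hn', v.map_sub_swap, le_antisymm_iff,
    and_comm]

variable {s : ℕ → K} {a c : K}

lemma ballCoord_isUnit_mem_VESet (hc : c ≠ 0) (hs : IsStationaryOfBreadth v s (v c))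
    (hsa : ∀ n, v c ≤ v (a - s n)) :
    ballCoord a c ∈ VESet v s ∧ (ballCoord a c)⁻¹ ∈ VESet v s :=
  (ballCoord_isUnit_mem_VESet_iff hc (hs.eventually_ne (v.ne_top_iff.2 hc) a)).2
    (hs.eventually_val_sub_eq hsa)

lemma VESet_eq_of_ballCoord_isUnit_mem {t : ℕ → K} (hc : c ≠ 0)
    (hs : IsStationaryOfBreadth v s (v c)) (hsa : ∀ n, v c ≤ v (a - s n))
    (ht : IsStationaryOfBreadth v t (v c))
    (hunit : ballCoord a c ∈ VESet v t ∧ (ballCoord a c)⁻¹ ∈ VESet v t) :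
    VESet v s = VESet v t := by
  have hvc : v c ≠ ⊤ := v.ne_top_iff.2 hc
  obtain ⟨n₀, hn₀⟩ := ((ballCoord_isUnit_mem_VESet_iff hc (ht.eventually_ne hvc a)).1 hunit).exists
  exact VESet_eq_of_le_val_sub hvc hs ht hsa (ht.le_val_sub hn₀.ge)

end BallCoord

section Topology

variable {L : Type*} [Field L]

def IsolatedByUnits (S : Set (ValuationSubring L)) : Prop :=
  ∀ W ∈ S, ∃ φ : L, (φ ∈ W ∧ φ⁻¹ ∈ W) ∧ ∀ W' ∈ S, φ ∈ W' → φ⁻¹ ∈ W' → W' = W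

lemma isOpen_zarTop_setOf_mem_and_mem (φ ψ : L) :
    IsOpen[zarTop L] {W : ValuationSubring L | φ ∈ W ∧ ψ ∈ W} :=
  GenerateOpen.inter _ _ (GenerateOpen.basic _ ⟨φ, rfl⟩) (GenerateOpen.basic _ ⟨ψ, rfl⟩)

lemma isOpen_consTop_setOf_mem_and_mem (φ ψ : L) :
    IsOpen[consTop L] {W : ValuationSubring L | φ ∈ W ∧ ψ ∈ W} := by
  classical
  exact GenerateOpen.basic _ ⟨{φ, ψ}, Or.inl (by ext; simp)⟩

lemma IsolatedByUnits.discreteTopology {S : Set (ValuationSubring L)} (hS : IsolatedByUnits S)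
    (τ : TopologicalSpace (ValuationSubring L))
    (hτ : ∀ φ ψ : L, IsOpen[τ] {W : ValuationSubring L | φ ∈ W ∧ ψ ∈ W}) :
    @DiscreteTopology S (τ.induced Subtype.val) := by
  refine @DiscreteTopology.mk _ _ (eq_bot_of_singletons_open fun W => ?_)
  obtain ⟨φ, hmem, huniq⟩ := hS W.1 W.2
  refine isOpen_induced_iff.2 ⟨_, hτ φ φ⁻¹, Set.ext fun W' => ?_⟩
  exact ⟨fun h => Subtype.ext (huniq W'.1 W'.2 h.1 h.2), fun h => h ▸ hmem⟩

lemma IsolatedByUnits.discreteTopology_zarSub_and_consSub {S : Set (ValuationSubring L)}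
    (hS : IsolatedByUnits S) :
    @DiscreteTopology S (zarSub S) ∧ @DiscreteTopology S (consSub S) :=
  ⟨hS.discreteTopology _ isOpen_zarTop_setOf_mem_and_mem,
    hS.discreteTopology _ isOpen_consTop_setOf_mem_and_mem⟩

end Topology

section Separation

variable {v : AddValuation K (WithTop ℝ)}

lemma isolatedByUnits_VVstatδ {c : K} (hc : c ≠ 0) : IsolatedByUnits (VVstatδ v (v c)) := by
  rintro W ⟨s, hs : IsStationaryOfBreadth v s (v c), hW⟩
  have hsa : ∀ n, v c ≤ v (s 0 - s n) := hs.le_val_sub (n₀ := 0) (by simp)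
  refine ⟨ballCoord (s 0) c, ?_, ?_⟩
  · simpa only [← SetLike.mem_coe, hW] using ballCoord_isUnit_mem_VESet hc hs hsa
  · rintro W' ⟨t, ht : IsStationaryOfBreadth v t (v c), hW'⟩ hφ hφinv
    rw [← SetLike.mem_coe, hW'] at hφ hφinv
    exact SetLike.coe_injective (hW'.trans (VESet_eq_of_ballCoord_isUnit_mem hc hs hsa ht
      ⟨hφ, hφinv⟩).symm |>.trans hW.symm)

lemma isolatedByUnits_VVstatβ (hv : IsRankOne v) (β : K) : IsolatedByUnits (VVstatβ v β) := by
  rintro W ⟨s, δ, hs : IsStationaryOfBreadth v s δ, hβs, hW⟩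
  have hδ : δ ≠ ⊤ := hs.ne_top hv hW
  set c := s 0 - s 1
  have hvc : v c = δ := hs 0 1 zero_ne_one
  have hc : c ≠ 0 := v.ne_top_iff.1 (hvc ▸ hδ)
  rw [← hvc] at hs hβs
  refine ⟨ballCoord β c, ?_, ?_⟩
  · simpa only [← SetLike.mem_coe, hW] using ballCoord_isUnit_mem_VESet hc hs hβs
  · rintro W' ⟨t, δ', ht : IsStationaryOfBreadth v t δ', hβt, hW'⟩ hφ hφinv
    rw [← SetLike.mem_coe, hW'] at hφ hφinv
    have hδ' : δ' ≠ ⊤ := ht.ne_top hv hW'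
    obtain ⟨n, hnc, hnδ'⟩ := (((ballCoord_isUnit_mem_VESet_iff hc (ht.eventually_ne hδ' β)).1
      ⟨hφ, hφinv⟩).and (ht.eventually_val_sub_eq hβt)).exists
    rw [hnc] at hnδ'
    subst hnδ'
    exact SetLike.coe_injective (hW'.trans (VESet_eq_of_ballCoord_isUnit_mem hc hs hβs ht
      ⟨hφ, hφinv⟩).symm |>.trans hW.symm)

end Separation

/-- For every `δ ∈ Γ_v` the space `𝒱_stat(•,δ)` is discrete, and for
every `β ∈ K` the space `𝒱_stat(β,•)` is discrete, with respect to both the Zariski and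
the constructible topology. -/
theorem statement19 (v : AddValuation K (WithTop ℝ)) (hv : IsRankOne v) :
    (∀ δ : ℝ, δ ∈ valueGroup v →
      @DiscreteTopology _ (zarSub (VVstatδ v (δ : WithTop ℝ))) ∧
      @DiscreteTopology _ (consSub (VVstatδ v (δ : WithTop ℝ)))) ∧
    (∀ β : K,
      @DiscreteTopology _ (zarSub (VVstatβ v β)) ∧
      @DiscreteTopology _ (consSub (VVstatβ v β))) := by
  refine ⟨fun δ ⟨c, hc⟩ => ?_,
    fun β => (isolatedByUnits_VVstatβ hv β).discreteTopology_zarSub_and_consSub⟩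
  have hc0 : c ≠ 0 := v.ne_top_iff.1 (hc ▸ WithTop.coe_ne_top)
  exact hc ▸ (isolatedByUnits_VVstatδ hc0).discreteTopology_zarSub_and_consSub

end PaperPCZar
end
end
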